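/- arXiv:2009.10536 — 8 statements merged into one kernel-verified Lean document; each statement's English description precedes it below -/
import Mathlib

section
/- Let f : ℝⁿ → ℝ ∪ {+∞} and let (x, α) be a point with α > f(x) > -∞. Then every proximal normal vector to the epigraph of f at (x, α) is a proximal normal to the epigraph at (x, f(x)) and has zero last coordinate; i.e., N^prox_{epi f}(x, α) ⊆ N^prox_{epi f}(x, f(x)) ∩ (ℝⁿ × {0}). -/
open Filter Metric Set
open scoped Topology RealInnerProductSpace

noncomputable section

abbrev Eu (n : ℕ) := EuclideanSpace ℝ (Fin n)

section GeneralDefs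

variable {E F : Type*} [NormedAddCommGroup E] [NormedSpace ℝ E]
  [NormedAddCommGroup F] [NormedSpace ℝ F]

/-- `v` is a proximal normal vector to `A` at `a`: for some `t > 0`,
`a` is a nearest point of `A` to `a + t • v`. -/
def proxNormal (A : Set E) (a : E) : Set E :=
  {v | ∃ t : ℝ, 0 < t ∧ ‖t • v‖ = Metric.infDist (a + t • v) A}

/-- the set of nearest points of `K` to `x` (metric projection). -/
def projSet (K : Set E) (x : E) : Set E :=
  {y | y ∈ K ∧ ∀ z ∈ K, ‖x - y‖ ≤ ‖x - z‖}

/-- the contingent (tangent) cone to `X` at `x`. -/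
def tangCone (X : Set E) (x : E) : Set E :=
  {w | ∃ (t : ℕ → ℝ) (v : ℕ → E), (∀ k, 0 < t k) ∧ Tendsto t atTop (𝓝 0) ∧
    Tendsto v atTop (𝓝 w) ∧ ∀ k, x + t k • v k ∈ X}

/-- `A` is locally closed at `a`. -/
def LocallyClosedAt (A : Set E) (a : E) : Prop := ∃ U ∈ 𝓝 a, IsClosed (A ∩ U)

/-- the graph of the restriction `S|_X`. -/
def svGraph (S : E → Set F) (X : Set E) : Set (E × F) := {p | p.1 ∈ X ∧ p.2 ∈ S p.1}

/-- the Lipschitz-like property of `S` relative to `X` at `x₀` for `u₀` with constant `κ`. -/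
def LipschitzLikeRel (S : E → Set F) (X : Set E) (x₀ : E) (u₀ : F) (κ : ℝ) : Prop :=
  LocallyClosedAt (svGraph S univ) (x₀, u₀) ∧
  ∃ V ∈ 𝓝 x₀, ∃ W ∈ 𝓝 u₀, ∀ x ∈ X ∩ V, ∀ x' ∈ X ∩ V, ∀ u ∈ S x' ∩ W,
    ∃ u'' ∈ S x, ‖u - u''‖ ≤ κ * ‖x' - x‖

/-- the graphical modulus of `S` relative to `X` at `x₀` for `u₀` (as an extended real,
the infimum of all Lipschitz-like constants). -/
def gmod (S : E → Set F) (X : Set E) (x₀ : E) (u₀ : F) : EReal :=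
  sInf {c : EReal | ∃ κ : ℝ, 0 ≤ κ ∧ c = (κ : EReal) ∧
    ∃ V ∈ 𝓝 x₀, ∃ W ∈ 𝓝 u₀, ∀ x ∈ X ∩ V, ∀ x' ∈ X ∩ V, ∀ u ∈ S x' ∩ W,
      ∃ u'' ∈ S x, ‖u - u''‖ ≤ κ * ‖x' - x‖}

/-- the horizon cone of `A`. -/
def horizonCone (A : Set E) : Set E :=
  {w | ∃ (a : ℕ → E) (l : ℕ → ℝ), (∀ k, a k ∈ A) ∧ (∀ k, 0 < l k) ∧
    Tendsto l atTop (𝓝 0) ∧ Tendsto (fun k => l k • a k) atTop (𝓝 w)}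

/-- extended-real absolute difference `|a - b|`. -/
def eabsdiff (a b : EReal) : EReal := max (a - b) (b - a)

/-- `f` is locally Lipschitz continuous at `x₀` relative to `X`. -/
def RelLipschitzAt (f : E → EReal) (X : Set E) (x₀ : E) : Prop :=
  ∃ κ : ℝ, 0 ≤ κ ∧ ∃ V ∈ 𝓝 x₀, ∀ x ∈ X ∩ V, ∀ y ∈ X ∩ V,
    eabsdiff (f x) (f y) ≤ ((κ * ‖x - y‖ : ℝ) : EReal)

/-- the Lipschitz modulus of `f` at `x₀` relative to `X` (as an extended real). -/
def relLipMod (f : E → EReal) (X : Set E) (x₀ : E) : EReal :=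
  sInf {c : EReal | ∃ κ : ℝ, 0 ≤ κ ∧ c = (κ : EReal) ∧ ∃ V ∈ 𝓝 x₀,
    ∀ x ∈ X ∩ V, ∀ y ∈ X ∩ V, eabsdiff (f x) (f y) ≤ ((κ * ‖x - y‖ : ℝ) : EReal)}

end GeneralDefs

section InnerDefs

variable {E F : Type*} [NormedAddCommGroup E] [InnerProductSpace ℝ E]
  [NormedAddCommGroup F] [InnerProductSpace ℝ F]

/-- the regular (Fréchet) normal cone to `A ⊆ E × F` at `a`. -/
def regNormalP (A : Set (E × F)) (a : E × F) : Set (E × F) :=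
  {v | ∀ ε : ℝ, 0 < ε → ∃ δ > 0, ∀ b ∈ A, ‖b - a‖ ≤ δ →
    ⟪v.1, b.1 - a.1⟫ + ⟪v.2, b.2 - a.2⟫ ≤ ε * ‖b - a‖}

/-- the limiting (Mordukhovich) normal cone to `A ⊆ E × F` at `a`. -/
def limNormalP (A : Set (E × F)) (a : E × F) : Set (E × F) :=
  {v | ∃ (b : ℕ → E × F) (w : ℕ → E × F), (∀ k, b k ∈ A) ∧
    (∀ k, w k ∈ regNormalP A (b k)) ∧ Tendsto b atTop (𝓝 a) ∧ Tendsto w atTop (𝓝 v)}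

/-- the limiting coderivative of `S` at `x` for `u`:
`xs ∈ coderiv S x u us ↔ (xs, -us) ∈ N_{graph S}(x, u)`. -/
def coderiv (S : E → Set F) (x : E) (u : F) (us : F) : Set E :=
  {xs | (xs, -us) ∈ limNormalP (svGraph S univ) (x, u)}

/-- the projectional coderivative of `S` at `x₀` for `u₀` with respect to `X`. -/
def projCoderiv (S : E → Set F) (X : Set E) (x₀ : E) (u₀ : F) (us : F) : Set E :=
  {xs | ∃ (x : ℕ → E) (u : ℕ → F) (xv : ℕ → E) (uv : ℕ → F) (y : ℕ → E),
    (∀ k, (x k, u k) ∈ svGraph S X) ∧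
    (∀ k, (xv k, -(uv k)) ∈ limNormalP (svGraph S X) (x k, u k)) ∧
    (∀ k, y k ∈ projSet (tangCone X (x k)) (xv k)) ∧
    Tendsto x atTop (𝓝 x₀) ∧ Tendsto u atTop (𝓝 u₀) ∧
    Tendsto uv atTop (𝓝 us) ∧ Tendsto y atTop (𝓝 xs)}

/-- the regular (Fréchet) subdifferential of an extended-real-valued function. -/
def regSubdiff (g : E → EReal) (x : E) : Set E :=
  {v | ∀ ε : ℝ, 0 < ε → ∃ δ > 0, ∀ y, ‖y - x‖ ≤ δ →
    g x + ((⟪v, y - x⟫ - ε * ‖y - x‖ : ℝ) : EReal) ≤ g y}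

/-- the limiting (Mordukhovich) subdifferential. -/
def limSubdiff (g : E → EReal) (x : E) : Set E :=
  {v | ∃ (xk vk : ℕ → E), Tendsto xk atTop (𝓝 x) ∧
    Tendsto (fun k => g (xk k)) atTop (𝓝 (g x)) ∧
    (∀ k, vk k ∈ regSubdiff g (xk k)) ∧ Tendsto vk atTop (𝓝 v)}

/-- the horizon (singular) subdifferential. -/
def horizonSubdiff (g : E → EReal) (x : E) : Set E :=
  {v | ∃ (xk vk : ℕ → E) (lk : ℕ → ℝ), Tendsto xk atTop (𝓝 x) ∧
    Tendsto (fun k => g (xk k)) atTop (𝓝 (g x)) ∧ (∀ k, 0 < lk k) ∧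
    Tendsto lk atTop (𝓝 0) ∧ (∀ k, vk k ∈ regSubdiff g (xk k)) ∧
    Tendsto (fun k => lk k • vk k) atTop (𝓝 v)}

/-- the outer limiting subdifferential of `g` at `xb` with respect to `vb`. -/
def outerSubdiffWrt (g : E → EReal) (xb vb : E) : Set E :=
  {v | ∃ (xk vk : ℕ → E), Tendsto xk atTop (𝓝 xb) ∧
    Tendsto (fun k => g (xk k)) atTop (𝓝 (g xb)) ∧
    (∀ k, g xb + ((⟪vb, xk k - xb⟫ : ℝ) : EReal) < g (xk k)) ∧
    (∀ k, vk k ∈ limSubdiff g (xk k)) ∧ Tendsto vk atTop (𝓝 v)}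

/-- `D` is a convex polyhedron (finite intersection of closed half-spaces). -/
def IsPolyhedral (D : Set E) : Prop :=
  ∃ s : Finset (E × ℝ), D = {v | ∀ p ∈ s, ⟪p.1, v⟫ ≤ p.2}

/-- the support function of `D`. -/
def supportFn (D : Set E) : E → EReal :=
  fun x => sSup ((fun v => ((⟪v, x⟫ : ℝ) : EReal)) '' D)

end InnerDefs

/-!
Let `r = f x < α`. The epigraph is invariant under upward vertical translations, so translating
the picture down by `α - r` shows that a nearest point `(x, α)` to `(x, α) + t v` yields the
nearest point `(x, r)` to `(x, r) + t v`. Moreover the vertical segment through `(x, α)` of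
half-length `α - r` lies in the epigraph, and a proximal normal is orthogonal to every segment
through its base point contained in the set, so the last coordinate of `v` vanishes.
-/

section NormedSpace

variable {E : Type*} [NormedAddCommGroup E] [NormedSpace ℝ E] {A : Set E} {a v : E}

theorem mem_proxNormal_iff (ha : a ∈ A) :
    v ∈ proxNormal A a ↔ ∃ t : ℝ, 0 < t ∧ ∀ b ∈ A, ‖t • v‖ ≤ dist (a + t • v) b := by
  refine exists_congr fun t => and_congr_right fun _ => ⟨fun h b hb => ?_, fun h => ?_⟩
  · exact h.trans_le (infDist_le_dist_of_mem hb)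
  · refine le_antisymm ((le_infDist ⟨a, ha⟩).2 h) ?_
    simpa using infDist_le_dist_of_mem (x := a + t • v) ha

theorem proxNormal_subset_proxNormal_sub {c : E} (hA : ∀ b ∈ A, b + c ∈ A) (ha : a - c ∈ A) :
    proxNormal A a ⊆ proxNormal A (a - c) := by
  intro v hv
  obtain ⟨t, ht, hnear⟩ := (mem_proxNormal_iff (by simpa using hA _ ha)).1 hv
  refine (mem_proxNormal_iff ha).2 ⟨t, ht, fun b hb => ?_⟩
  calc ‖t • v‖ ≤ dist (a + t • v) (b + c) := hnear _ (hA b hb)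
    _ = dist (a - c + t • v) b := by rw [dist_eq_norm, dist_eq_norm]; congr 1; abel

end NormedSpace

section InnerProductSpace

variable {E : Type*} [NormedAddCommGroup E] [InnerProductSpace ℝ E] {A : Set E} {a v w : E}
  {δ : ℝ}

theorem inner_nonpos_of_mem_proxNormal (hδ : 0 < δ) (hA : ∀ s ∈ Icc 0 δ, a + s • w ∈ A)
    (hv : v ∈ proxNormal A a) : ⟪v, w⟫ ≤ 0 := by
  obtain ⟨t, ht, hnear⟩ :=
    (mem_proxNormal_iff (by simpa using hA 0 ⟨le_rfl, hδ.le⟩)).1 hv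
  have hsq : ∀ s ∈ Icc 0 δ, 2 * t * s * ⟪v, w⟫ ≤ s ^ 2 * ‖w‖ ^ 2 := by
    intro s hs
    have h := hnear _ (hA s hs)
    rw [dist_eq_norm, add_sub_add_left_eq_sub] at h
    have h2 := pow_le_pow_left₀ (norm_nonneg _) h 2
    simp only [norm_sub_sq_real, inner_smul_left, inner_smul_right, norm_smul,
      Real.norm_eq_abs, mul_pow, sq_abs, conj_trivial] at h2
    nlinarith
  by_contra! hpos
  have hw : 0 < ‖w‖ := norm_pos_iff.2 fun h => by simp [h] at hpos
  -- a step `s ≤ t ⟪v, w⟫ / ‖w‖²` violates the quadratic inequality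
  set s := min δ (t * ⟪v, w⟫ / ‖w‖ ^ 2)
  have hs : 0 < s := lt_min hδ (by positivity)
  have hsw : s * ‖w‖ ^ 2 ≤ t * ⟪v, w⟫ :=
    (le_div_iff₀ (by positivity)).1 (min_le_right _ _)
  have := hsq s ⟨hs.le, min_le_left _ _⟩
  nlinarith [mul_pos ht hpos]

theorem inner_eq_zero_of_mem_proxNormal (hδ : 0 < δ) (hA : ∀ s ∈ Icc (-δ) δ, a + s • w ∈ A)
    (hv : v ∈ proxNormal A a) : ⟪v, w⟫ = 0 := by
  have hle := inner_nonpos_of_mem_proxNormal hδ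
    (fun s hs => hA s ⟨by linarith [hs.1], hs.2⟩) hv
  have hge := inner_nonpos_of_mem_proxNormal (w := -w) hδ
    (fun s hs => by simpa using hA (-s) ⟨by linarith [hs.2], by linarith [hs.1]⟩) hv
  rw [inner_neg_right] at hge
  linarith

end InnerProductSpace

section Epigraph

variable {E : Type*} [NormedAddCommGroup E] {f : E → EReal}

def epigraph (f : E → EReal) : Set (WithLp 2 (E × ℝ)) :=
  {p | f p.ofLp.1 ≤ (p.ofLp.2 : EReal)}

theorem add_toLp_zero_mem_epigraph {p : WithLp 2 (E × ℝ)} (hp : p ∈ epigraph f) {c : ℝ}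
    (hc : 0 ≤ c) : p + WithLp.toLp 2 (0, c) ∈ epigraph f := by
  simpa [epigraph] using hp.trans (EReal.coe_le_coe_iff.2 (le_add_of_nonneg_right hc))

theorem toLp_add_smul_mem_epigraph [NormedSpace ℝ E] {x : E} {r α s : ℝ} (hx : f x ≤ r)
    (hs : r - α ≤ s) :
    WithLp.toLp 2 (x, α) + s • WithLp.toLp 2 ((0 : E), (1 : ℝ)) ∈ epigraph f := by
  simp only [epigraph, mem_ofPred_eq, WithLp.ofLp_add, WithLp.ofLp_smul,
    Prod.fst_add, Prod.snd_add, Prod.smul_fst, Prod.smul_snd, smul_zero, add_zero, smul_eq_mul,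
    mul_one]
  exact hx.trans (EReal.coe_le_coe_iff.2 (by linarith))

end Epigraph

/-- proximal normals to epigraphs (Lemma 3.1). -/
theorem prox_normal_epi {n : ℕ} (f : Eu n → EReal) (x : Eu n) (α : ℝ)
    (h1 : f x < (α : EReal)) (h2 : (⊥ : EReal) < f x) :
    proxNormal
        {p : WithLp 2 (Eu n × ℝ) |
          f (WithLp.equiv 2 (Eu n × ℝ) p).1 ≤ (((WithLp.equiv 2 (Eu n × ℝ) p).2 : ℝ) : EReal)}
        ((WithLp.equiv 2 (Eu n × ℝ)).symm (x, α)) ⊆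
      proxNormal
        {p : WithLp 2 (Eu n × ℝ) |
          f (WithLp.equiv 2 (Eu n × ℝ) p).1 ≤ (((WithLp.equiv 2 (Eu n × ℝ) p).2 : ℝ) : EReal)}
        ((WithLp.equiv 2 (Eu n × ℝ)).symm (x, (f x).toReal)) ∩
      {v : WithLp 2 (Eu n × ℝ) | (WithLp.equiv 2 (Eu n × ℝ) v).2 = 0} := by
  set r := (f x).toReal
  have hfx : f x = r := (EReal.coe_toReal (h1.trans_le le_top).ne h2.ne').symm
  have hrα : r < α := by rw [hfx] at h1; exact_mod_cast h1
  have hxr : WithLp.toLp 2 (x, r) ∈ epigraph f := hfx.le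
  have hsub : WithLp.toLp 2 (x, α) - WithLp.toLp 2 (0, α - r) = WithLp.toLp 2 (x, r) := by
    rw [← WithLp.toLp_sub]; simp
  change proxNormal (epigraph f) (WithLp.toLp 2 (x, α)) ⊆
    proxNormal (epigraph f) (WithLp.toLp 2 (x, r)) ∩ {v | v.ofLp.2 = 0}
  intro v hv
  refine ⟨?_, ?_⟩
  · rw [← hsub]
    have hshift : ∀ b ∈ epigraph f, b + WithLp.toLp 2 (0, α - r) ∈ epigraph f :=
      fun p hp => add_toLp_zero_mem_epigraph hp (sub_nonneg.2 hrα.le)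
    have hbase : WithLp.toLp 2 (x, α) - WithLp.toLp 2 (0, α - r) ∈ epigraph f := by rwa [hsub]
    exact proxNormal_subset_proxNormal_sub hshift hbase hv
  · have hseg : ∀ s ∈ Icc (-(α - r)) (α - r),
        WithLp.toLp 2 (x, α) + s • WithLp.toLp 2 ((0 : Eu n), (1 : ℝ)) ∈ epigraph f :=
      fun s hs => toLp_add_smul_mem_epigraph hfx.le (by linarith [hs.1])
    simpa using inner_eq_zero_of_mem_proxNormal (sub_pos.2 hrα) hseg hv
end
end

section
/- Let S : ℝⁿ ⇉ ℝᵐ be a set-valued mapping, X ⊆ ℝⁿ closed, (x̄, ū) ∈ graph S with x̄ ∈ X, and κ ≥ 0. If S has the Lipschitz-like property relative to X at x̄ for ū with constant κ, then for all (x, u) ∈ graph(S|_X) sufficiently close to (x̄, ū): whenever (x*, -u*) belongs to the regular (Fréchet) normal cone to graph(S|_X) at (x, u), one has ⟨x*, w⟩ ≤ κ‖u*‖ for every unit vector w in the tangent cone T_X(x). -/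
open Filter Metric Set
open scoped Topology RealInnerProductSpace

noncomputable section

/-- Theorem 2.1, Necessity: if `S` has the Lipschitz-like property relative
to a closed set `X` at `x̄` for `ū` with constant `κ`, then for all `(x, u) ∈ graph S|_X`
close enough to `(x̄, ū)`, every `(x*, -u*)` in the regular normal cone to `graph S|_X`
satisfies `⟨x*, w⟩ ≤ κ‖u*‖` for all unit vectors `w ∈ T_X(x)`. -/
theorem lipschitzLikeRel_necessity {n m : ℕ} (S : Eu n → Set (Eu m)) (X : Set (Eu n))
    (xb : Eu n) (ub : Eu m) (hX : IsClosed X) (hxb : xb ∈ X) (hub : ub ∈ S xb)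
    (κ : ℝ) (hκ : 0 ≤ κ) (hL : LipschitzLikeRel S X xb ub κ) :
    ∀ᶠ p : Eu n × Eu m in 𝓝 (xb, ub), p ∈ svGraph S X →
      ∀ xs us, (xs, -us) ∈ regNormalP (svGraph S X) p →
        ∀ w ∈ tangCone X p.1, ‖w‖ = 1 → ⟪xs, w⟫ ≤ κ * ‖us‖ := by
  obtain ⟨-, V, hV, W, hW, hLip⟩ := hL
  obtain ⟨U, hUV, hUopen, hxbU⟩ := _root_.mem_nhds_iff.mp hV
  filter_upwards [prod_mem_nhds (hUopen.mem_nhds hxbU) hW] with p hp hpg xs us hns w hw hw1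
  obtain ⟨hpU, hpW⟩ := hp
  obtain ⟨hpX, hpS⟩ := hpg
  obtain ⟨t, v, ht, ht0, hv, hmem⟩ := hw
  have h1κ : (0:ℝ) < 1 + κ := by linarith
  have key : ∀ ε : ℝ, 0 < ε → ⟪xs, w⟫ ≤ κ * ‖us‖ + ε * (1 + κ) := by
    intro ε hε
    obtain ⟨δ, hδ, hδ'⟩ := hns ε hε
    have hsm : Tendsto (fun k => t k • v k) atTop (𝓝 (0 : Eu n)) := by
      have := ht0.smul hv
      simpa using this
    have hadd : Tendsto (fun k => p.1 + t k • v k) atTop (𝓝 p.1) := by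
      have : Tendsto (fun k => p.1 + t k • v k) atTop (𝓝 (p.1 + 0)) :=
        tendsto_const_nhds.add hsm
      simpa using this
    have h1 : ∀ᶠ k in atTop, p.1 + t k • v k ∈ U :=
      hadd.eventually (hUopen.mem_nhds hpU)
    have hns0 : Tendsto (fun k => ‖t k • v k‖ * (1 + κ)) atTop (𝓝 0) := by
      have := hsm.norm.mul_const (1 + κ)
      simpa using this
    have h2 : ∀ᶠ k in atTop, ‖t k • v k‖ * (1 + κ) < δ :=
      hns0.eventually (gt_mem_nhds hδ)
    have hineq : ∀ᶠ k in atTop, ⟪xs, v k⟫ ≤ ‖v k‖ * (κ * ‖us‖ + ε * (1 + κ)) := by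
      filter_upwards [h1, h2] with k hkU hkδ
      obtain ⟨u'', hu''S, hu''n⟩ :=
        hLip (p.1 + t k • v k) ⟨hmem k, hUV hkU⟩ p.1 ⟨hpX, hUV hpU⟩ p.2 ⟨hpS, hpW⟩
      have hdiff : ‖p.1 - (p.1 + t k • v k)‖ = ‖t k • v k‖ := by
        rw [sub_add_eq_sub_sub, sub_self, zero_sub, norm_neg]
      rw [hdiff] at hu''n
      set b : Eu n × Eu m := (p.1 + t k • v k, u'') with hb
      have hbA : b ∈ svGraph S X := ⟨hmem k, hu''S⟩
      have hb1 : b.1 - p.1 = t k • v k := by simp [hb]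
      have hb2n : ‖b.2 - p.2‖ ≤ κ * ‖t k • v k‖ := by
        rw [show b.2 - p.2 = -(p.2 - u'') by simp [hb], norm_neg]; exact hu''n
      have hbnorm : ‖b - p‖ ≤ ‖t k • v k‖ * (1 + κ) := by
        rw [Prod.norm_def, Prod.fst_sub, Prod.snd_sub]
        apply max_le
        · rw [hb1]; nlinarith [norm_nonneg (t k • v k)]
        · nlinarith [norm_nonneg (t k • v k), hb2n]
      have hbδ : ‖b - p‖ ≤ δ := hbnorm.trans hkδ.le
      have hmain := hδ' b hbA hbδ
      rw [show b.1 - p.1 = t k • v k from hb1] at hmain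
      have hinner2 : ⟪(-us : Eu m), b.2 - p.2⟫ ≥ -(‖us‖ * (κ * ‖t k • v k‖)) := by
        have := abs_real_inner_le_norm us (b.2 - p.2)
        have h2' : ‖us‖ * ‖b.2 - p.2‖ ≤ ‖us‖ * (κ * ‖t k • v k‖) :=
          mul_le_mul_of_nonneg_left hb2n (norm_nonneg us)
        rw [inner_neg_left]
        have := (abs_le.mp this).2
        linarith
      have hεb : ε * ‖b - p‖ ≤ ε * (‖t k • v k‖ * (1 + κ)) :=
        mul_le_mul_of_nonneg_left hbnorm hε.le
      have hfin : ⟪xs, t k • v k⟫ ≤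
          ‖t k • v k‖ * (κ * ‖us‖ + ε * (1 + κ)) := by
        have := hmain.trans hεb
        nlinarith [hinner2]
      rw [real_inner_smul_right] at hfin
      have htn : ‖t k • v k‖ = t k * ‖v k‖ := by
        rw [norm_smul, Real.norm_eq_abs, abs_of_pos (ht k)]
      rw [htn] at hfin
      have := (ht k)
      nlinarith [hfin]
    have hL1 : Tendsto (fun k => ⟪xs, v k⟫) atTop (𝓝 ⟪xs, w⟫) :=
      (tendsto_const_nhds : Tendsto (fun _ : ℕ => xs) atTop (𝓝 xs)).inner hv
    have hL2 : Tendsto (fun k => ‖v k‖ * (κ * ‖us‖ + ε * (1 + κ))) atTop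
        (𝓝 (κ * ‖us‖ + ε * (1 + κ))) := by
      have := hv.norm.mul_const (κ * ‖us‖ + ε * (1 + κ))
      rw [hw1] at this
      simpa using this
    exact le_of_tendsto_of_tendsto hL1 hL2 hineq
  refine le_of_forall_pos_le_add fun ε' hε' => ?_
  have := key (ε' / (1 + κ)) (div_pos hε' h1κ)
  rwa [div_mul_cancel₀ _ h1κ.ne'] at this
end
end

section
/- Let S : ℝⁿ ⇉ ℝᵐ, X ⊆ ℝⁿ closed, (x̄, ū) ∈ graph S with x̄ ∈ X, and 0 < κ < κ̃. Suppose graph S is locally closed at (x̄, ū). If for all (x, u) ∈ graph(S|_X) close enough to (x̄, ū) and all (x*, -u*) in the limiting normal cone to graph(S|_X) at (x, u), one has sup{⟨x*, w⟩ | w ∈ cl pos(X − x), ‖w‖ = 1} ≤ κ‖u*‖, then S has the Lipschitz-like property relative to X at x̄ for ū with constant κ̃. -/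
open Filter Metric Set
open scoped Topology RealInnerProductSpace

noncomputable section

/-!
Fix `x, x' ∈ X` near `x̄`, `u ∈ S x'` near `ū`, and put `ε = ‖x' - x‖`. Minimise the penalty
`κ ‖z - x‖ + √(‖v - u‖² + σ²)` with `σ = (κ̃ - κ) ε` over the graph of `S|_X` cut down to a small
closed ball; in finite dimensions this set is compact, which replaces Ekeland's principle.
Comparing with the value `κ̃ ε` at `(x', u)` keeps the minimiser `(z, v)` close to `(x̄, ū)` and
gives `‖v - u‖ ≤ κ̃ ε`. If `z ≠ x`, the penalty is differentiable at `(z, v)` (this is what `σ > 0`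
is for), so its negative gradient `(x*, -u*)` is a regular normal to the graph; but
`⟨x*, (x - z) / ‖x - z‖⟩ = κ` while `‖u*‖ < 1`, contradicting the hypothesis. Hence `z = x`.
-/

open InnerProductSpace

theorem norm_lt_sqrt_norm_sq_add_sq {F : Type*} [NormedAddCommGroup F] (v : F) {σ : ℝ}
    (hσ : σ ≠ 0) : ‖v‖ < √(‖v‖ ^ 2 + σ ^ 2) :=
  Real.lt_sqrt_of_sq_lt (lt_add_of_pos_right _ (pow_two_pos_of_ne_zero hσ))

theorem IsMinOn.isLocalMinOn_of_mem_nhds {α β : Type*} [TopologicalSpace α] [Preorder β]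
    {f : α → β} {s t : Set α} {a : α} (hf : IsMinOn f (s ∩ t) a) (ht : t ∈ 𝓝 a) :
    IsLocalMinOn f s a := by
  rw [IsLocalMinOn, nhdsWithin_restrict' s ht]
  exact hf.localize

theorem svGraph_eq_inter_prod {E F : Type*} (S : E → Set F) (X : Set E) :
    svGraph S X = svGraph S univ ∩ X ×ˢ univ := by
  ext p
  simp [svGraph, and_comm]

section Normed

variable {E F : Type*} [NormedAddCommGroup E] [NormedAddCommGroup F]

theorem exists_isCompact_svGraph_inter_closedBall [ProperSpace E] [ProperSpace F]
    {S : E → Set F} {X : Set E} {p : E × F} (hloc : LocallyClosedAt (svGraph S univ) p)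
    (hX : IsClosed X) : ∃ r₀ > 0, ∀ r ≤ r₀, IsCompact (svGraph S X ∩ closedBall p r) := by
  obtain ⟨U, hU, hUclosed⟩ := hloc
  obtain ⟨ρ, hρ, hball⟩ := Metric.mem_nhds_iff.mp hU
  refine ⟨ρ / 2, half_pos hρ, fun r hr => ?_⟩
  have hsub : closedBall p r ⊆ U :=
    (closedBall_subset_ball (by linarith)).trans hball
  have heq : svGraph S X ∩ closedBall p r =
      (svGraph S univ ∩ U) ∩ (X ×ˢ univ ∩ closedBall p r) := by
    rw [svGraph_eq_inter_prod]
    ext q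
    constructor
    · rintro ⟨⟨hq, hqX⟩, hqr⟩
      exact ⟨⟨hq, hsub hqr⟩, hqX, hqr⟩
    · rintro ⟨⟨hq, -⟩, hqX, hqr⟩
      exact ⟨⟨hq, hqX⟩, hqr⟩
  rw [heq]
  exact (isCompact_closedBall p r).of_isClosed_subset
    (hUclosed.inter ((hX.prod isClosed_univ).inter isClosed_closedBall))
    (inter_subset_right.trans inter_subset_right)

theorem mem_ball_of_norm_sub_le {c : E × F} {κ δ r : ℝ} (hκ : 0 ≤ κ) (hr : (2 * κ + 3) * δ ≤ r)
    {x x' z : E} {u v : F} (hx : x ∈ ball c.1 δ) (hx' : x' ∈ ball c.1 δ) (hu : u ∈ ball c.2 δ)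
    (hz : ‖z - x‖ ≤ ‖x' - x‖) (hv : ‖v - u‖ ≤ κ * ‖x' - x‖) : (z, v) ∈ ball c r := by
  rw [mem_ball] at hx hx' hu
  have hxx' : ‖x' - x‖ < 2 * δ := by
    rw [← dist_eq_norm]
    linarith [dist_triangle_right x' x c.1]
  have hκx : κ * ‖x' - x‖ ≤ κ * (2 * δ) := mul_le_mul_of_nonneg_left hxx'.le hκ
  have hκδ : 0 ≤ κ * δ := mul_nonneg hκ (dist_nonneg.trans hx.le)
  have hzc : dist z c.1 < r := by
    linarith [dist_triangle z x c.1, dist_eq_norm z x]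
  have hvc : dist v c.2 < r := by
    linarith [dist_triangle v u c.2, dist_eq_norm v u, dist_nonneg (x := u) (y := c.2)]
  rw [mem_ball, Prod.dist_eq]
  exact max_lt hzc hvc

end Normed

section Inner

variable {E F : Type*} [NormedAddCommGroup E] [InnerProductSpace ℝ E]
  [NormedAddCommGroup F] [InnerProductSpace ℝ F]

theorem hasGradientAt_sqrt_norm_sub_sq_add [CompleteSpace E] (x z : E) {c : ℝ}
    (h : ‖z - x‖ ^ 2 + c ≠ 0) :
    HasGradientAt (fun y => √(‖y - x‖ ^ 2 + c)) ((√(‖z - x‖ ^ 2 + c))⁻¹ • (z - x)) z := by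
  rw [hasGradientAt_iff_hasFDerivAt]
  refine (((hasFDerivAt_id z).sub_const x).norm_sq.add_const c).sqrt h |>.congr_fderiv ?_
  ext y
  simp only [id_eq, one_div, mul_inv_rev, map_sub, ContinuousLinearMap.comp_id, smul_apply,
    sub_apply, coe_innerSL_apply, nsmul_eq_mul, Nat.cast_ofNat, smul_eq_mul, map_smul,
    toDual_apply_apply]
  field_simp

theorem neg_mem_regNormalP_of_isLocalMinOn [CompleteSpace E] [CompleteSpace F]
    {A : Set (E × F)} {a : E × F} {φ : E → ℝ} {ψ : F → ℝ} {g₁ : E} {g₂ : F}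
    (hφ : HasGradientAt φ g₁ a.1) (hψ : HasGradientAt ψ g₂ a.2)
    (hmin : IsLocalMinOn (fun p => φ p.1 + ψ p.2) A a) : (-g₁, -g₂) ∈ regNormalP A a := by
  have hf : HasFDerivAt (fun p : E × F => φ p.1 + ψ p.2)
      ((toDual ℝ E g₁).comp (ContinuousLinearMap.fst ℝ E F) +
        (toDual ℝ F g₂).comp (ContinuousLinearMap.snd ℝ E F)) a :=
    (hφ.hasFDerivAt.comp a hasFDerivAt_fst).add (hψ.hasFDerivAt.comp a hasFDerivAt_snd)
  intro ε hε
  obtain ⟨δ, hδ, hball⟩ := Metric.eventually_nhds_iff.mp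
    ((hf.isLittleO.def hε).and (eventually_nhdsWithin_iff.mp hmin))
  refine ⟨δ / 2, half_pos hδ, fun b hb hba => ?_⟩
  obtain ⟨hlin, hle⟩ := hball (by rw [dist_eq_norm]; linarith)
  have hmin_b : φ a.1 + ψ a.2 ≤ φ b.1 + ψ b.2 := hle hb
  have htaylor := (abs_le.mp (Real.norm_eq_abs _ ▸ hlin)).2
  simp only [add_apply, ContinuousLinearMap.coe_comp, Function.comp_apply,
    ContinuousLinearMap.coe_fst', ContinuousLinearMap.coe_snd', toDual_apply_apply,
    Prod.fst_sub, Prod.snd_sub] at htaylor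
  simp only [inner_neg_left]
  linarith

theorem HasGradientAt.const_mul [CompleteSpace E] {f : E → ℝ} {g x : E}
    (hf : HasGradientAt f g x) (a : ℝ) :
    HasGradientAt (fun y => a * f y) (a • g) x := by
  rw [hasGradientAt_iff_hasFDerivAt, map_smulₛₗ]
  exact hf.hasFDerivAt.const_mul a

theorem hasGradientAt_norm_sub [CompleteSpace E] {x z : E} (h : z ≠ x) :
    HasGradientAt (fun y => ‖y - x‖) (‖z - x‖⁻¹ • (z - x)) z := by
  have hz : ‖z - x‖ ^ 2 + 0 ≠ 0 := by simpa [sub_eq_zero] using h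
  simpa [Real.sqrt_sq (norm_nonneg _)] using hasGradientAt_sqrt_norm_sub_sq_add x z hz

theorem regNormalP_subset_limNormalP (A : Set (E × F)) {a : E × F} (ha : a ∈ A) :
    regNormalP A a ⊆ limNormalP A a := fun v hv =>
  ⟨fun _ => a, fun _ => v, fun _ => ha, fun _ => hv, tendsto_const_nhds, tendsto_const_nhds⟩

theorem inner_sub_le_of_forall_unit_mem_closure {X : Set E} {x xs : E} {C : ℝ}
    (h : ∀ w ∈ closure {w : E | ∃ l : ℝ, 0 ≤ l ∧ ∃ y ∈ X, w = l • (y - x)}, ‖w‖ = 1 →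
      ⟪xs, w⟫ ≤ C) {y : E} (hy : y ∈ X) : ⟪xs, y - x⟫ ≤ C * ‖y - x‖ := by
  rcases eq_or_ne y x with rfl | hne
  · simp
  have hpos : 0 < ‖y - x‖ := norm_pos_iff.mpr (sub_ne_zero.mpr hne)
  have hw := h _ (subset_closure ⟨_, inv_nonneg.mpr hpos.le, y, hy, rfl⟩)
    (norm_smul_inv_norm (sub_ne_zero.mpr hne))
  rw [real_inner_smul_right, inv_mul_le_iff₀ hpos, mul_comm] at hw
  exact hw

theorem eq_of_isLocalMinOn_of_regNormalP_bound [CompleteSpace E] [CompleteSpace F]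
    {G : Set (E × F)} {x z : E} {u v : F} {κ σ : ℝ} (hκ : 0 < κ) (hσ : σ ≠ 0)
    (hmin : IsLocalMinOn (fun p => κ * ‖p.1 - x‖ + √(‖p.2 - u‖ ^ 2 + σ ^ 2)) G (z, v))
    (hbound : ∀ xs us, (xs, -us) ∈ regNormalP G (z, v) → ⟪xs, x - z⟫ ≤ κ * ‖us‖ * ‖x - z‖) :
    z = x := by
  by_contra hzx
  set H := √(‖v - u‖ ^ 2 + σ ^ 2)
  have hvH : ‖v - u‖ < H := norm_lt_sqrt_norm_sq_add_sq (v - u) hσ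
  have hH : 0 < H := (norm_nonneg _).trans_lt hvH
  have hreg := neg_mem_regNormalP_of_isLocalMinOn (φ := fun y => κ * ‖y - x‖)
    (ψ := fun w => √(‖w - u‖ ^ 2 + σ ^ 2)) ((hasGradientAt_norm_sub hzx).const_mul κ)
    (hasGradientAt_sqrt_norm_sub_sq_add u v (Real.sqrt_ne_zero'.mp hH.ne').ne') hmin
  have hus : ‖H⁻¹ • (v - u)‖ < 1 := by
    rwa [norm_smul, norm_inv, Real.norm_of_nonneg hH.le, inv_mul_lt_one₀ hH]
  have hzx' : 0 < ‖z - x‖ := norm_pos_iff.mpr (sub_ne_zero.mpr hzx)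
  have hinner : ⟪-(κ • ‖z - x‖⁻¹ • (z - x)), x - z⟫ = κ * ‖z - x‖ := by
    rw [← neg_sub z x, inner_neg_left, inner_neg_right, neg_neg, real_inner_smul_left,
      real_inner_smul_left, real_inner_self_eq_norm_sq]
    field_simp
  have h := hbound _ _ hreg
  rw [hinner, norm_sub_rev x z] at h
  have := mul_lt_mul_of_pos_left hus (mul_pos hκ hzx')
  linarith

theorem exists_mem_norm_sub_le_of_regNormalP_bound [CompleteSpace E] [CompleteSpace F]
    {S : E → Set F} {X : Set E} {c : E × F} {r κ κ' : ℝ} (hκ : 0 < κ) (hκκ' : κ < κ')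
    (hA : IsCompact (svGraph S X ∩ closedBall c r))
    (hnormal : ∀ p ∈ svGraph S X ∩ ball c r, ∀ xs us, (xs, -us) ∈ regNormalP (svGraph S X) p →
      ∀ y ∈ X, ⟪xs, y - p.1⟫ ≤ κ * ‖us‖ * ‖y - p.1‖)
    {x x' : E} {u : F} (hx : x ∈ X) (hx'u : (x', u) ∈ svGraph S X)
    (hnear : ∀ z v, ‖z - x‖ ≤ ‖x' - x‖ → ‖v - u‖ ≤ κ' * ‖x' - x‖ → (z, v) ∈ ball c r) :
    ∃ u' ∈ S x, ‖u - u'‖ ≤ κ' * ‖x' - x‖ := by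
  rcases eq_or_ne x' x with rfl | hne
  · exact ⟨u, hx'u.2, by simp⟩
  set ε := ‖x' - x‖
  have hε : 0 < ε := norm_pos_iff.mpr (sub_ne_zero.mpr hne)
  set σ := (κ' - κ) * ε
  have hσ : 0 < σ := mul_pos (sub_pos.mpr hκκ') hε
  set Φ : E × F → ℝ := fun p => κ * ‖p.1 - x‖ + √(‖p.2 - u‖ ^ 2 + σ ^ 2)
  have hx'u_mem : (x', u) ∈ svGraph S X ∩ closedBall c r :=
    ⟨hx'u, ball_subset_closedBall (hnear x' u le_rfl
      (by simpa using mul_nonneg (hκ.trans hκκ').le hε.le))⟩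
  obtain ⟨⟨z, v⟩, hzv, hmin⟩ :=
    hA.exists_isMinOn ⟨_, hx'u_mem⟩ (by fun_prop : Continuous Φ).continuousOn
  have hΦ : κ * ‖z - x‖ + √(‖v - u‖ ^ 2 + σ ^ 2) ≤ κ' * ε := by
    have hval : Φ (x', u) = κ' * ε := by
      simp only [Φ, sub_self, norm_zero, zero_pow two_ne_zero, zero_add, Real.sqrt_sq hσ.le, σ]
      ring
    exact hval ▸ hmin hx'u_mem
  have hσH : σ ≤ √(‖v - u‖ ^ 2 + σ ^ 2) :=
    Real.le_sqrt_of_sq_le (le_add_of_nonneg_left (sq_nonneg _))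
  have hv : ‖v - u‖ ≤ κ' * ε := by
    linarith [norm_lt_sqrt_norm_sq_add_sq (v - u) hσ.ne', mul_nonneg hκ.le (norm_nonneg (z - x))]
  have hz : ‖z - x‖ ≤ ε := le_of_mul_le_mul_left (by linarith) hκ
  have hball := hnear z v hz hv
  obtain rfl : z = x :=
    eq_of_isLocalMinOn_of_regNormalP_bound hκ hσ.ne'
      (hmin.isLocalMinOn_of_mem_nhds (closedBall_mem_nhds_of_mem hball))
      fun xs us hreg => hnormal (z, v) ⟨hzv.1, hball⟩ xs us hreg x hx
  exact ⟨v, hzv.1.2, norm_sub_rev u v ▸ hv⟩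

end Inner

theorem lipschitzLikeRel_sufficiency_general {n m : ℕ} (S : Eu n → Set (Eu m)) (X : Set (Eu n))
    (xb : Eu n) (ub : Eu m) (hX : IsClosed X)
    (κ κ' : ℝ) (hκ : 0 < κ) (hκκ' : κ < κ')
    (hloc : LocallyClosedAt (svGraph S univ) (xb, ub))
    (hcond : ∀ᶠ p : Eu n × Eu m in 𝓝 (xb, ub), p ∈ svGraph S X →
      ∀ xs us, (xs, -us) ∈ limNormalP (svGraph S X) p →
        ∀ w ∈ closure {w : Eu n | ∃ l : ℝ, 0 ≤ l ∧ ∃ y ∈ X, w = l • (y - p.1)},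
          ‖w‖ = 1 → ⟪xs, w⟫ ≤ κ * ‖us‖) :
    LipschitzLikeRel S X xb ub κ' := by
  obtain ⟨r₀, hr₀, hcompact⟩ := exists_isCompact_svGraph_inter_closedBall hloc hX
  obtain ⟨r₁, hr₁, hcond'⟩ := Metric.eventually_nhds_iff.mp hcond
  set r := min r₀ r₁
  have hnormal : ∀ p ∈ svGraph S X ∩ ball (xb, ub) r, ∀ xs us,
      (xs, -us) ∈ regNormalP (svGraph S X) p → ∀ y ∈ X, ⟪xs, y - p.1⟫ ≤ κ * ‖us‖ * ‖y - p.1‖ :=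
    fun p ⟨hp, hpr⟩ xs us hreg y hy =>
      inner_sub_le_of_forall_unit_mem_closure (hcond' (lt_of_lt_of_le hpr (min_le_right _ _)) hp
        xs us (regNormalP_subset_limNormalP _ hp hreg)) hy
  have hlin : 0 < 2 * κ' + 3 := by linarith
  set δ := r / (2 * κ' + 3)
  have hδ : 0 < δ := div_pos (lt_min hr₀ hr₁) hlin
  refine ⟨hloc, ball xb δ, ball_mem_nhds xb hδ, ball ub δ, ball_mem_nhds ub hδ,
    fun x hx x' hx' u hu => ?_⟩
  exact exists_mem_norm_sub_le_of_regNormalP_bound hκ hκκ' (hcompact r (min_le_left _ _))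
    hnormal hx.1 ⟨hx'.1, hu.1⟩ fun z v hz hv => mem_ball_of_norm_sub_le (by linarith)
      (mul_div_cancel₀ r hlin.ne').le hx.2 hx'.2 hu.2 hz hv

/-- Theorem 2.2, Sufficiency: if for all `(x, u) ∈ graph S|_X` close enough
to `(x̄, ū)` and all `(x*, -u*)` in the limiting normal cone to `graph S|_X` at `(x, u)`,
one has `⟨x*, w⟩ ≤ κ‖u*‖` for all unit vectors `w ∈ cl pos(X - x)`, then `S` has the
Lipschitz-like property relative to `X` at `x̄` for `ū` with constant `κ̃ > κ`. -/
theorem lipschitzLikeRel_sufficiency {n m : ℕ} (S : Eu n → Set (Eu m)) (X : Set (Eu n))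
    (xb : Eu n) (ub : Eu m) (hX : IsClosed X) (hxb : xb ∈ X) (hub : ub ∈ S xb)
    (κ κ' : ℝ) (hκ : 0 < κ) (hκκ' : κ < κ')
    (hloc : LocallyClosedAt (svGraph S univ) (xb, ub))
    (hcond : ∀ᶠ p : Eu n × Eu m in 𝓝 (xb, ub), p ∈ svGraph S X →
      ∀ xs us, (xs, -us) ∈ limNormalP (svGraph S X) p →
        ∀ w ∈ closure {w : Eu n | ∃ l : ℝ, 0 ≤ l ∧ ∃ y ∈ X, w = l • (y - p.1)},
          ‖w‖ = 1 → ⟪xs, w⟫ ≤ κ * ‖us‖) :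
    LipschitzLikeRel S X xb ub κ' :=
  lipschitzLikeRel_sufficiency_general S X xb ub hX κ κ' hκ hκκ' hloc hcond
end
end

section
/- Let S : ℝⁿ ⇉ ℝᵐ be positively homogeneous with closed graph and outer semicontinuous at 0. Then S(0) = {0} if and only if the outer norm |S|⁺ := sup_{‖x‖ ≤ 1} sup_{u ∈ S(x)} ‖u‖ is finite. -/
open Filter Metric Set
open scoped Topology RealInnerProductSpace

noncomputable section

open scoped Pointwise

/-- cf. Rockafellar–Wets, Prop. 9.23: for a positively homogeneous
set-valued mapping with closed graph that is outer semicontinuous at `0`,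
`S(0) = {0}` iff the outer norm `|S|⁺` is finite. -/
theorem posHomogeneous_zero_iff_outerNorm_finite {n m : ℕ} (S : Eu n → Set (Eu m))
    (h0 : (0 : Eu m) ∈ S 0) (hph : ∀ l : ℝ, 0 < l → ∀ x : Eu n, S (l • x) = l • S x)
    (hclosed : IsClosed (svGraph S univ))
    (hosc : ∀ (xk : ℕ → Eu n) (uk : ℕ → Eu m) (u : Eu m),
      Tendsto xk atTop (𝓝 0) → (∀ k, uk k ∈ S (xk k)) → Tendsto uk atTop (𝓝 u) →
        u ∈ S 0) :
    S 0 = {0} ↔ ∃ C : ℝ, ∀ x : Eu n, ‖x‖ ≤ 1 → ∀ u ∈ S x, ‖u‖ ≤ C := by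
  constructor
  · intro hS0
    by_contra hC
    push_neg at hC
    choose x hx u hu hnorm using fun k : ℕ => hC ((k : ℝ) + 1)
    have hpos : ∀ k : ℕ, (0 : ℝ) < ‖u k‖ := fun k =>
      lt_of_le_of_lt (by positivity) (hnorm k)
    set v : ℕ → Eu m := fun k => (‖u k‖)⁻¹ • u k with hv
    set w : ℕ → Eu n := fun k => (‖u k‖)⁻¹ • x k with hw
    have hvmem : ∀ k, v k ∈ S (w k) := by
      intro k
      rw [hw, hph _ (inv_pos.mpr (hpos k)) (x k)]
      exact smul_mem_smul_set (hu k)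
    have hvs : ∀ k, v k ∈ Metric.sphere (0 : Eu m) 1 := by
      intro k
      simp [hv, norm_smul, abs_of_nonneg (inv_nonneg.mpr (norm_nonneg _)),
        inv_mul_cancel₀ (hpos k).ne']
    obtain ⟨u0, hu0, φ, hφ, hconv⟩ :=
      (isCompact_sphere (0 : Eu m) 1).tendsto_subseq hvs
    have hwto : Tendsto w atTop (𝓝 0) := by
      refine squeeze_zero_norm (fun k => ?_) tendsto_one_div_add_atTop_nhds_zero_nat
      have h1 : (0:ℝ) < (k : ℝ) + 1 := by positivity
      have : ‖w k‖ = ‖u k‖⁻¹ * ‖x k‖ := by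
        simp [hw, norm_smul, abs_of_nonneg (inv_nonneg.mpr (norm_nonneg _))]
      rw [this, one_div]
      calc ‖u k‖⁻¹ * ‖x k‖ ≤ ‖u k‖⁻¹ * 1 := by
            exact mul_le_mul_of_nonneg_left (hx k) (inv_nonneg.mpr (norm_nonneg _))
        _ = ‖u k‖⁻¹ := mul_one _
        _ ≤ ((k : ℝ) + 1)⁻¹ := by
            exact inv_anti₀ h1 (hnorm k).le
    have := hosc (w ∘ φ) (v ∘ φ) u0 (hwto.comp hφ.tendsto_atTop)
      (fun k => hvmem (φ k)) hconv
    rw [hS0] at this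
    have : u0 = 0 := this
    have h1 : ‖u0‖ = 1 := by simpa using hu0
    rw [this] at h1
    simp at h1
  · rintro ⟨C, hC⟩
    ext u
    simp only [Set.mem_singleton_iff]
    constructor
    · intro hu
      by_contra hne
      have hu0 : (0:ℝ) < ‖u‖ := norm_pos_iff.mpr hne
      have hCpos : (0:ℝ) ≤ C := le_trans (norm_nonneg _) (hC 0 (by simp) 0 h0)
      have hl : (0:ℝ) < (C + 1) / ‖u‖ := by positivity
      have hmem : ((C + 1) / ‖u‖) • u ∈ S 0 := by
        have := hph _ hl (0 : Eu n)
        rw [smul_zero] at this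
        rw [this]
        exact smul_mem_smul_set hu
      have hb := hC 0 (by simp) _ hmem
      rw [norm_smul, Real.norm_eq_abs, abs_of_pos hl, div_mul_cancel₀ _ hu0.ne'] at hb
      linarith
    · rintro rfl; exact h0
end
end

section
/- Let F : ℝⁿ → ℝᵐ be continuously differentiable and let X = {x | ⟨a, x⟩ ≤ β} be a closed half-space with a ≠ 0. For x̄ on the boundary of X (i.e., ⟨a, x̄⟩ = β), the projectional coderivative of F with respect to X at x̄ is: D*_X F(x̄)(y) = the segment [∇F(x̄)*y, proj_{[a]^⊥}(∇F(x̄)*y)] if ⟨∇F(x̄)*y, a⟩ ≤ 0, and the two-point set {∇F(x̄)*y, proj_{[a]^⊥}(∇F(x̄)*y)} if ⟨∇F(x̄)*y, a⟩ > 0. -/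
/-!
On the graph of `F|_X`, the regular normals at `(x, F x)` are the vectors `(∇F(x)*y + t a, -y)`
with `t ≥ 0`, and `t = 0` unless `x` lies on the hyperplane `⟨a, x⟩ = β`; since `∇F` is
continuous, limiting normals have the same form. Projecting `∇F(x)*y + t a` onto the tangent cone
(all of `ℝⁿ` in the interior, the half-space `⟨a, ·⟩ ≤ 0` on the boundary) gives
`∇F(x)*y + r a` with `r` between `0` and `-⟨∇F(x)*y, a⟩ / ‖a‖²`, and only these two endpoints
occur when `⟨∇F(x)*y, a⟩ > 0`. Both constraints pass to the limit. Conversely, `∇F(x̄)*y` is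
reached from interior points tending to `x̄`, and every other candidate is attained at `x̄` itself.
-/

open Filter Metric Set
open scoped Topology RealInnerProductSpace

noncomputable section

open scoped InnerProduct

section Halfspace

variable {E : Type*} [NormedAddCommGroup E] [InnerProductSpace ℝ E]

lemma projSet_eq_singleton_of_inner_nonpos {K : Set E} {v p : E} (hp : p ∈ K)
    (h : ∀ z ∈ K, ⟪v - p, z - p⟫ ≤ 0) : projSet K v = {p} := by
  have key : ∀ z ∈ K, ‖v - p‖ ^ 2 + ‖z - p‖ ^ 2 ≤ ‖v - z‖ ^ 2 := fun z hz => by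
    have : v - z = (v - p) - (z - p) := by abel
    rw [this, norm_sub_sq_real (v - p)]
    linarith [h z hz]
  ext y
  refine ⟨fun ⟨hy, hmin⟩ => ?_, fun hy => ?_⟩
  · have h1 := key y hy
    have h2 := pow_le_pow_left₀ (norm_nonneg _) (hmin p hp) 2
    have : ‖y - p‖ ^ 2 = 0 := le_antisymm (by linarith) (by positivity)
    simpa [sub_eq_zero] using this
  · rw [mem_singleton_iff.mp hy]
    refine ⟨hp, fun z hz => pow_le_pow_iff_left₀ (norm_nonneg _) (norm_nonneg _)
      two_ne_zero |>.mp ?_⟩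
    linarith [key z hz, sq_nonneg ‖z - p‖]

lemma projSet_univ (v : E) : projSet univ v = {v} :=
  projSet_eq_singleton_of_inner_nonpos (mem_univ v) fun z _ => by simp

lemma projSet_halfspace (a v : E) :
    projSet {w | ⟪a, w⟫ ≤ 0} v = {v - (max ⟪v, a⟫ 0 / ‖a‖ ^ 2) • a} := by
  set c := max ⟪v, a⟫ 0 / ‖a‖ ^ 2
  have hc : c * ‖a‖ ^ 2 = max ⟪v, a⟫ 0 :=
    div_mul_cancel_of_imp fun ha => by rw [sq_eq_zero_iff, norm_eq_zero] at ha; simp [ha]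
  have hc0 : 0 ≤ c := by positivity
  have hpa : ⟪a, v - c • a⟫ = ⟪v, a⟫ - max ⟪v, a⟫ 0 := by
    rw [inner_sub_right, real_inner_smul_right, real_inner_self_eq_norm_sq, hc,
      real_inner_comm]
  -- `c = 0` unless `⟪v, a⟫ > 0`, in which case `v - c • a` lies on the boundary hyperplane
  have hcpa : c * ⟪a, v - c • a⟫ = 0 := by
    rcases le_total ⟪v, a⟫ 0 with h | h
    · simp [c, max_eq_right h]
    · simp [hpa, max_eq_left h]
  refine projSet_eq_singleton_of_inner_nonpos ?_ fun z hz => ?_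
  · simp only [mem_ofPred_eq, hpa]
    linarith [le_max_left ⟪v, a⟫ 0]
  · have hz' : ⟪a, z⟫ ≤ 0 := hz
    rw [sub_sub_cancel, real_inner_smul_left, inner_sub_right, mul_sub, hcpa, sub_zero]
    exact mul_nonpos_of_nonneg_of_nonpos hc0 hz'

lemma mem_tangCone_of_eventually {X : Set E} {x w : E}
    (h : ∀ᶠ t in 𝓝[>] (0 : ℝ), x + t • w ∈ X) : w ∈ tangCone X x := by
  obtain ⟨ε, hε, hX⟩ := (nhdsGT_basis (0 : ℝ)).eventually_iff.mp h
  refine ⟨fun k => ε / ((k : ℝ) + 2), fun _ => w, fun k => by positivity, ?_,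
    tendsto_const_nhds, fun k => hX ⟨by positivity, ?_⟩⟩
  · exact tendsto_const_nhds.div_atTop
      (tendsto_natCast_atTop_atTop.atTop_add tendsto_const_nhds)
  · exact div_lt_self hε (by linarith [(Nat.cast_nonneg k : (0 : ℝ) ≤ k)])

lemma eventually_add_smul_mem_of_mem_nhds {X : Set E} {x : E} (hX : X ∈ 𝓝 x) (w : E) :
    ∀ᶠ t in 𝓝[>] (0 : ℝ), x + t • w ∈ X := by
  have : Tendsto (fun t : ℝ => x + t • w) (𝓝 0) (𝓝 x) := by
    simpa using ((continuous_id.smul continuous_const).const_add x).tendsto (0 : ℝ)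
  exact (this.eventually hX).filter_mono nhdsWithin_le_nhds

lemma tangCone_eq_univ_of_mem_nhds {X : Set E} {x : E} (hX : X ∈ 𝓝 x) :
    tangCone X x = univ :=
  eq_univ_of_forall fun w => mem_tangCone_of_eventually (eventually_add_smul_mem_of_mem_nhds hX w)

lemma halfspace_mem_nhds {a x : E} {β : ℝ} (hx : ⟪a, x⟫ < β) :
    {x : E | ⟪a, x⟫ ≤ β} ∈ 𝓝 x :=
  mem_of_superset
    ((isOpen_lt (f := fun y : E => ⟪a, y⟫) (by fun_prop) continuous_const).mem_nhds hx)
    fun y (h : ⟪a, y⟫ < β) => show ⟪a, y⟫ ≤ β from h.le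

lemma inner_add_smul_le_of_eq {a x w : E} {β t : ℝ} (hx : ⟪a, x⟫ = β) (ht : 0 ≤ t)
    (hw : ⟪a, w⟫ ≤ 0) : ⟪a, x + t • w⟫ ≤ β := by
  rw [inner_add_right, real_inner_smul_right, hx]
  nlinarith

lemma tangCone_halfspace_of_eq {a x : E} {β : ℝ} (hx : ⟪a, x⟫ = β) :
    tangCone {x : E | ⟪a, x⟫ ≤ β} x = {w | ⟪a, w⟫ ≤ 0} := by
  ext w
  refine ⟨fun ⟨t, v, ht, _, hv, hmem⟩ => ?_, fun hw => mem_tangCone_of_eventually ?_⟩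
  · refine le_of_tendsto (tendsto_const_nhds.inner (𝕜 := ℝ) hv) (Eventually.of_forall fun k => ?_)
    have := hmem k
    simp only [mem_ofPred_eq, inner_add_right, real_inner_smul_right, hx] at this
    exact nonpos_of_mul_nonpos_right (by linarith) (ht k)
  · exact eventually_nhdsWithin_of_forall fun t ht =>
      inner_add_smul_le_of_eq hx (le_of_lt ht) (show ⟪a, w⟫ ≤ 0 from hw)

lemma inner_add_smul_self (c a : E) (t : ℝ) : ⟪c + t • a, a⟫ = ⟪c, a⟫ + t * ‖a‖ ^ 2 := by
  rw [inner_add_left, real_inner_smul_left, real_inner_self_eq_norm_sq]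

lemma exists_nonneg_smul_of_inner_nonpos {a z : E} (h : ∀ w, ⟪a, w⟫ ≤ 0 → ⟪z, w⟫ ≤ 0) :
    ∃ t : ℝ, 0 ≤ t ∧ z = t • a := by
  set t := ⟪z, a⟫ / ‖a‖ ^ 2
  have ht : t * ‖a‖ ^ 2 = ⟪z, a⟫ :=
    div_mul_cancel_of_imp fun ha => by rw [sq_eq_zero_iff, norm_eq_zero] at ha; simp [ha]
  -- `w` is orthogonal to `a`, so both `w` and `-w` are admissible test directions
  set w := z - t • a
  have haw : ⟪a, w⟫ = 0 := by
    rw [inner_sub_right, real_inner_smul_right, real_inner_self_eq_norm_sq, ht, real_inner_comm,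
      sub_self]
  have hzw : ⟪z, w⟫ = 0 := le_antisymm (h w haw.le)
    (by simpa [inner_neg_right] using h (-w) (by simp [inner_neg_right, haw]))
  have hww : ⟪w, w⟫ = 0 := by
    rw [show ⟪w, w⟫ = ⟪z, w⟫ - t * ⟪a, w⟫ by rw [inner_sub_left, real_inner_smul_left], hzw,
      haw, mul_zero, sub_zero]
  have hza : 0 ≤ ⟪z, a⟫ := by simpa [inner_neg_right] using h (-a) (by simp [inner_neg_right])
  exact ⟨t, by positivity, sub_eq_zero.mp (inner_self_eq_zero.mp hww)⟩

lemma exists_tendsto_of_tendsto_smul_const {ι : Type*} {l : Filter ι} [l.NeBot] {a z : E}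
    {t : ι → ℝ} (ha : a ≠ 0) (h : Tendsto (fun k => t k • a) l (𝓝 z)) :
    ∃ T, Tendsto t l (𝓝 T) ∧ z = T • a := by
  have hcoeff : ∀ s : ℝ, ⟪s • a, a⟫ / ‖a‖ ^ 2 = s := fun s => by
    rw [real_inner_smul_left, real_inner_self_eq_norm_sq, mul_div_assoc,
      div_self (by positivity), mul_one]
  have ht : Tendsto t l (𝓝 (⟪z, a⟫ / ‖a‖ ^ 2)) :=
    ((h.inner (𝕜 := ℝ) tendsto_const_nhds).div_const _).congr fun k => hcoeff (t k)
  exact ⟨_, ht, tendsto_nhds_unique h (ht.smul_const a)⟩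

end Halfspace

section GraphNormals

variable {E F : Type*} [NormedAddCommGroup E] [InnerProductSpace ℝ E]
  [NormedAddCommGroup F] [InnerProductSpace ℝ F]

lemma mem_limNormalP_of_mem_regNormalP {A : Set (E × F)} {p v : E × F} (hp : p ∈ A)
    (hv : v ∈ regNormalP A p) : v ∈ limNormalP A p :=
  ⟨fun _ => p, fun _ => v, fun _ => hp, fun _ => hv, tendsto_const_nhds, tendsto_const_nhds⟩

lemma mem_projCoderiv_of_mem_projSet {S : E → Set F} {X : Set E} {x xv z : E} {u us : F}
    (hxu : (x, u) ∈ svGraph S X) (hv : (xv, -us) ∈ limNormalP (svGraph S X) (x, u))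
    (hz : z ∈ projSet (tangCone X x) xv) : z ∈ projCoderiv S X x u us :=
  ⟨fun _ => x, fun _ => u, fun _ => xv, fun _ => us, fun _ => z, fun _ => hxu, fun _ => hv,
    fun _ => hz, tendsto_const_nhds, tendsto_const_nhds, tendsto_const_nhds, tendsto_const_nhds⟩

lemma inner_deriv_nonpos_of_mem_regNormalP {A : Set (E × F)} {γ : ℝ → E × F} {γ' v : E × F}
    (hγ : HasDerivAt γ γ' 0) (hA : ∀ᶠ t in 𝓝[>] 0, γ t ∈ A) (hv : v ∈ regNormalP A (γ 0)) :
    ⟪v.1, γ'.1⟫ + ⟪v.2, γ'.2⟫ ≤ 0 := by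
  set L : E × F → ℝ := fun p => ⟪v.1, p.1⟫ + ⟪v.2, p.2⟫
  have hL : Continuous L := by fun_prop
  have hL_smul : ∀ (t : ℝ) p, L (t • p) = t * L p := fun t p => by
    simp only [L, Prod.smul_fst, Prod.smul_snd, real_inner_smul_right]; ring
  suffices h : ∀ ε > 0, L γ' ≤ ε * ‖γ'‖ by
    refine le_of_forall_pos_le_add fun ε hε => (h (ε / (‖γ'‖ + 1)) (by positivity)).trans ?_
    rw [div_mul_eq_mul_div, div_le_iff₀ (by positivity)]
    nlinarith [norm_nonneg γ']
  intro ε hε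
  obtain ⟨δ, hδ, hnormal⟩ := hv ε hε
  have hslope := hγ.tendsto_slope_zero_right
  have hclose : ∀ᶠ t in 𝓝[>] 0, γ t ∈ closedBall (γ 0) δ :=
    (hγ.continuousAt.eventually_mem (closedBall_mem_nhds _ hδ)).filter_mono nhdsWithin_le_nhds
  refine le_of_tendsto_of_tendsto ((hL.tendsto γ').comp hslope)
    (((continuous_norm.tendsto γ').comp hslope).const_mul ε) ?_
  filter_upwards [hA, hclose, self_mem_nhdsWithin] with t htA htδ (ht : 0 < t)
  have key : L (γ t - γ 0) ≤ ε * ‖γ t - γ 0‖ :=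
    hnormal (γ t) htA (mem_closedBall_iff_norm.mp htδ)
  simp only [Function.comp_apply, zero_add, hL_smul, norm_smul, Real.norm_eq_abs,
    abs_inv, abs_of_pos ht]
  have := mul_le_mul_of_nonneg_left key (inv_pos.mpr ht).le
  linarith

variable [CompleteSpace E] [CompleteSpace F]

lemma inner_adjoint_nonpos_of_mem_regNormalP {f : E → F} {f' : E →L[ℝ] F} {X : Set E}
    {x w v₁ : E} {v₂ : F} (hf : HasFDerivAt f f' x)
    (hv : (v₁, v₂) ∈ regNormalP (svGraph (fun x => {f x}) X) (x, f x))
    (hw : ∀ᶠ t in 𝓝[>] (0 : ℝ), x + t • w ∈ X) : ⟪v₁ + (f'†) v₂, w⟫ ≤ 0 := by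
  have hline : HasDerivAt (fun t : ℝ => x + t • w) w 0 := by
    simpa using ((hasDerivAt_id (0 : ℝ)).smul_const w).const_add x
  have hγ : HasDerivAt (fun t : ℝ => (x + t • w, f (x + t • w))) (w, f' w) 0 :=
    hline.prodMk (hf.comp_hasDerivAt_of_eq 0 hline (by simp))
  have := inner_deriv_nonpos_of_mem_regNormalP (A := svGraph (fun x => {f x}) X) hγ
    (hw.mono fun t ht => ⟨ht, rfl⟩) (by simpa using hv)
  rwa [inner_add_left, ContinuousLinearMap.adjoint_inner_left]

lemma adjoint_add_mem_regNormalP {f : E → F} {f' : E →L[ℝ] F} {X : Set E} {x v : E}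
    (hf : HasFDerivAt f f' x) (hv : ∀ x' ∈ X, ⟪v, x' - x⟫ ≤ 0) (y : F) :
    ((f'†) y + v, -y) ∈ regNormalP (svGraph (fun x => {f x}) X) (x, f x) := by
  intro ε hε
  set ε' := ε / (‖y‖ + 1)
  have hε' : ‖y‖ * ε' ≤ ε := by
    rw [mul_div_assoc', div_le_iff₀ (by positivity)]
    nlinarith [norm_nonneg y]
  obtain ⟨δ, hδ, hrem⟩ := Metric.nhds_basis_closedBall.eventually_iff.mp
    (hf.isLittleO.def (c := ε') (by positivity))
  refine ⟨δ, hδ, ?_⟩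
  rintro ⟨x', u'⟩ ⟨hx', hu'⟩ hnear
  obtain rfl : u' = f x' := hu'
  have hx'x : ‖x' - x‖ ≤ ‖((x', f x') : E × F) - (x, f x)‖ := by simp
  have hR : ‖f x' - f x - f' (x' - x)‖ ≤ ε' * ‖x' - x‖ :=
    hrem (mem_closedBall_iff_norm.mpr (hx'x.trans hnear))
  calc ⟪(f'†) y + v, x' - x⟫ + ⟪-y, f x' - f x⟫
      = ⟪v, x' - x⟫ + ⟪-y, f x' - f x - f' (x' - x)⟫ := by
        simp only [inner_add_left, ContinuousLinearMap.adjoint_inner_left, inner_neg_left,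
          inner_sub_right, map_sub]
        ring
    _ ≤ 0 + ‖y‖ * (ε' * ‖x' - x‖) := by
        gcongr
        · exact hv x' hx'
        · exact (real_inner_le_norm _ _).trans (by rw [norm_neg]; gcongr)
    _ ≤ ε * ‖((x', f x') : E × F) - (x, f x)‖ := by
        rw [zero_add, ← mul_assoc]
        exact mul_le_mul hε' hx'x (norm_nonneg _) hε.le

end GraphNormals

section HalfspaceCoderiv

variable {E : Type*} [NormedAddCommGroup E] [InnerProductSpace ℝ E]

/-- The right-hand side of the theorem, parametrized by `r ↦ c + r • a`: `r = 0` gives `c` and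
`r = -⟪c, a⟫ / ‖a‖ ^ 2` gives `proj_{[a]^⊥} c`. -/
def halfspaceCoderivSet (a c : E) : Set E :=
  (fun r : ℝ => c + r • a) ''
    {r | r ∈ uIcc 0 (-(⟪c, a⟫ / ‖a‖ ^ 2)) ∧ (0 < ⟪c, a⟫ → r = 0 ∨ r = -(⟪c, a⟫ / ‖a‖ ^ 2))}

lemma mem_halfspaceCoderivSet_of_mem_projSet_tangCone {a x c y : E} {β t : ℝ} (ha : a ≠ 0)
    (hx : ⟪a, x⟫ ≤ β) (ht : 0 ≤ t) (hint : ⟪a, x⟫ < β → t = 0)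
    (hy : y ∈ projSet (tangCone {x | ⟪a, x⟫ ≤ β} x) (c + t • a)) :
    y ∈ halfspaceCoderivSet a c := by
  have hna : 0 < ‖a‖ ^ 2 := by positivity
  rcases hx.lt_or_eq with hlt | heq
  · rw [tangCone_eq_univ_of_mem_nhds (halfspace_mem_nhds hlt), projSet_univ, hint hlt,
      zero_smul, add_zero] at hy
    exact ⟨0, ⟨left_mem_uIcc, fun _ => Or.inl rfl⟩, by simp [mem_singleton_iff.mp hy]⟩
  rw [tangCone_halfspace_of_eq heq, projSet_halfspace, inner_add_smul_self,
    mem_singleton_iff] at hy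
  rcases le_or_gt (⟪c, a⟫ + t * ‖a‖ ^ 2) 0 with hneg | hpos
  · have htq : t ≤ -(⟪c, a⟫ / ‖a‖ ^ 2) := by
      rw [le_neg, div_le_iff₀ hna]
      linarith
    refine ⟨t, ⟨?_, fun hμ => absurd hneg (by nlinarith)⟩, ?_⟩
    · exact uIcc_of_le (ht.trans htq) ▸ ⟨ht, htq⟩
    · rw [hy, max_eq_right hneg]
      simp
  · refine ⟨_, ⟨right_mem_uIcc, fun _ => Or.inr rfl⟩, ?_⟩
    rw [hy, max_eq_left hpos.le, add_div, mul_div_assoc, div_self hna.ne', mul_one]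
    module

lemma mem_halfspaceCoderivSet_of_tendsto {a c₀ y₀ : E} {c y : ℕ → E} (ha : a ≠ 0)
    (hc : Tendsto c atTop (𝓝 c₀)) (hy : Tendsto y atTop (𝓝 y₀))
    (h : ∀ k, y k ∈ halfspaceCoderivSet a (c k)) : y₀ ∈ halfspaceCoderivSet a c₀ := by
  choose r hr hyr using h
  obtain ⟨R, hR, hyR⟩ := exists_tendsto_of_tendsto_smul_const ha
    ((hy.sub hc).congr fun k => by rw [← hyr k, add_sub_cancel_left])
  have hμ : Tendsto (fun k => ⟪c k, a⟫) atTop (𝓝 ⟪c₀, a⟫) := hc.inner tendsto_const_nhds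
  have hq := (hμ.div_const (‖a‖ ^ 2)).neg
  refine ⟨R, ⟨⟨?_, ?_⟩, fun hpos => ?_⟩, by simp [← hyR]⟩
  · exact le_of_tendsto_of_tendsto' (tendsto_const_nhds.min hq) hR fun k => (hr k).1.1
  · exact le_of_tendsto_of_tendsto' hR (tendsto_const_nhds.max hq) fun k => (hr k).1.2
  · have hev : (fun k => r k * (r k - -(⟪c k, a⟫ / ‖a‖ ^ 2))) =ᶠ[atTop] fun _ => 0 :=
      (hμ.eventually (lt_mem_nhds hpos)).mono fun k hk => by
        rcases (hr k).2 hk with h | h <;> simp [h]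
    have := tendsto_nhds_unique_of_eventuallyEq (hR.mul (hR.sub hq)) tendsto_const_nhds hev
    rcases mul_eq_zero.mp this with h | h
    · exact Or.inl h
    · exact Or.inr (sub_eq_zero.mp h)

lemma image_add_smul_uIcc (c a : E) (q : ℝ) :
    (fun r : ℝ => c + r • a) '' uIcc 0 q = segment ℝ c (c + q • a) := by
  have hline : (fun r : ℝ => c + r • a) = AffineMap.lineMap c (c + a) := by
    ext r
    simp [AffineMap.lineMap_apply, add_comm]
  rw [← segment_eq_uIcc, hline, image_segment]
  simp [AffineMap.lineMap_apply, add_comm]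

lemma halfspaceCoderivSet_of_inner_nonpos {a c : E} (h : ⟪c, a⟫ ≤ 0) :
    halfspaceCoderivSet a c = segment ℝ c (c - (⟪c, a⟫ / ‖a‖ ^ 2) • a) := by
  rw [sub_eq_add_neg, ← neg_smul, ← image_add_smul_uIcc, halfspaceCoderivSet]
  simp [h.not_gt]

lemma halfspaceCoderivSet_of_inner_pos {a c : E} (h : 0 < ⟪c, a⟫) :
    halfspaceCoderivSet a c = {c, c - (⟪c, a⟫ / ‖a‖ ^ 2) • a} := by
  have : {r | r ∈ uIcc 0 (-(⟪c, a⟫ / ‖a‖ ^ 2)) ∧ (0 < ⟪c, a⟫ → r = 0 ∨ r = -(⟪c, a⟫ / ‖a‖ ^ 2))}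
      = {0, -(⟪c, a⟫ / ‖a‖ ^ 2)} := by
    ext r
    simp only [mem_ofPred_eq, mem_insert_iff, mem_singleton_iff, h, true_implies]
    constructor
    · exact fun h => h.2
    · rintro (rfl | rfl)
      exacts [⟨left_mem_uIcc, Or.inl rfl⟩, ⟨right_mem_uIcc, Or.inr rfl⟩]
  rw [halfspaceCoderivSet, this, image_pair, zero_smul, add_zero, neg_smul, ← sub_eq_add_neg]

end HalfspaceCoderiv

section GraphHalfspace

variable {E F : Type*} [NormedAddCommGroup E] [InnerProductSpace ℝ E] [CompleteSpace E]
  [NormedAddCommGroup F] [InnerProductSpace ℝ F] [CompleteSpace F]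

lemma tendsto_adjoint_fderiv_apply {f : E → F} (hf : ContDiff ℝ 1 f) {ι : Type*} {l : Filter ι}
    {x : ι → E} {u : ι → F} {x₀ : E} {u₀ : F} (hx : Tendsto x l (𝓝 x₀))
    (hu : Tendsto u l (𝓝 u₀)) :
    Tendsto (fun k => (fderiv ℝ f (x k)†) (u k)) l (𝓝 ((fderiv ℝ f x₀†) u₀)) := by
  have hadj : Continuous fun x => fderiv ℝ f x† :=
    (ContinuousLinearMap.adjoint (𝕜 := ℝ) (E := E) (F := F)).continuous.comp
      (hf.continuous_fderiv one_ne_zero)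
  have hcont : Continuous fun p : E × F => (fderiv ℝ f p.1†) p.2 :=
    (hadj.comp continuous_fst).clm_apply continuous_snd
  exact (hcont.tendsto (x₀, u₀)).comp (f := fun k => (x k, u k)) (hx.prodMk_nhds hu)

lemma adjoint_add_mem_limNormalP {f : E → F} {X : Set E} {x v : E}
    (hf : DifferentiableAt ℝ f x) (hx : x ∈ X) (hv : ∀ x' ∈ X, ⟪v, x' - x⟫ ≤ 0) (y : F) :
    ((fderiv ℝ f x†) y + v, -y) ∈ limNormalP (svGraph (fun x => {f x}) X) (x, f x) :=
  mem_limNormalP_of_mem_regNormalP ⟨hx, rfl⟩ (adjoint_add_mem_regNormalP hf.hasFDerivAt hv y)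

lemma regNormalP_graph_halfspace {f : E → F} {f' : E →L[ℝ] F} {a x v₁ : E} {v₂ : F} {β : ℝ}
    (hf : HasFDerivAt f f' x) (hx : ⟪a, x⟫ ≤ β)
    (hv : (v₁, v₂) ∈ regNormalP (svGraph (fun x => {f x}) {x | ⟪a, x⟫ ≤ β}) (x, f x)) :
    ∃ t : ℝ, 0 ≤ t ∧ v₁ + (f'†) v₂ = t • a ∧ (⟪a, x⟫ < β → t = 0) := by
  rcases hx.lt_or_eq with hlt | heq
  · have h := inner_adjoint_nonpos_of_mem_regNormalP hf hv
      (eventually_add_smul_mem_of_mem_nhds (halfspace_mem_nhds hlt) (v₁ + (f'†) v₂))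
    exact ⟨0, le_rfl, by simpa using real_inner_self_nonpos.mp h, fun _ => rfl⟩
  · obtain ⟨t, ht, hz⟩ := exists_nonneg_smul_of_inner_nonpos fun w hw =>
      inner_adjoint_nonpos_of_mem_regNormalP hf hv
        (eventually_nhdsWithin_of_forall fun s hs => inner_add_smul_le_of_eq heq (le_of_lt hs) hw)
    exact ⟨t, ht, hz, fun h => absurd heq h.ne⟩

lemma limNormalP_graph_halfspace {f : E → F} {a x v₁ : E} {v₂ : F} {β : ℝ}
    (hf : ContDiff ℝ 1 f) (ha : a ≠ 0)
    (hv : (v₁, v₂) ∈ limNormalP (svGraph (fun x => {f x}) {x | ⟪a, x⟫ ≤ β}) (x, f x)) :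
    ∃ t : ℝ, 0 ≤ t ∧ v₁ + (fderiv ℝ f x†) v₂ = t • a ∧ (⟪a, x⟫ < β → t = 0) := by
  obtain ⟨b, w, hbA, hw, hb, hwv⟩ := hv
  have hstep : ∀ k, ∃ t : ℝ, 0 ≤ t ∧ (w k).1 + (fderiv ℝ f (b k).1†) (w k).2 = t • a ∧
      (⟪a, (b k).1⟫ < β → t = 0) := fun k => by
    obtain ⟨hbX, hbf⟩ := hbA k
    have hbk : b k = ((b k).1, f (b k).1) := Prod.ext rfl hbf
    exact regNormalP_graph_halfspace ((hf.differentiable one_ne_zero _).hasFDerivAt) hbX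
      (hbk ▸ hw k)
  choose t ht hz hint using hstep
  have hb₁ : Tendsto (fun k => (b k).1) atTop (𝓝 x) := (continuous_fst.tendsto _).comp hb
  obtain ⟨T, hT, hzT⟩ := exists_tendsto_of_tendsto_smul_const ha
    (((continuous_fst.tendsto _).comp hwv |>.add
      (tendsto_adjoint_fderiv_apply hf hb₁ ((continuous_snd.tendsto _).comp hwv))).congr hz)
  refine ⟨T, ge_of_tendsto' hT ht, hzT, fun hlt => ?_⟩
  have hev : t =ᶠ[atTop] fun _ => 0 :=
    ((tendsto_const_nhds.inner (𝕜 := ℝ) hb₁).eventually (gt_mem_nhds hlt)).mono hint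
  exact tendsto_nhds_unique_of_eventuallyEq hT tendsto_const_nhds hev

lemma projCoderiv_graph_halfspace_subset {f : E → F} {a xb : E} {β : ℝ} (hf : ContDiff ℝ 1 f)
    (ha : a ≠ 0) (y : F) :
    projCoderiv (fun x => {f x}) {x | ⟪a, x⟫ ≤ β} xb (f xb) y ⊆
      halfspaceCoderivSet a ((fderiv ℝ f xb†) y) := by
  rintro z ⟨x, u, xv, uv, yk, hgraph, hnormal, hproj, hx, -, huv, hyk⟩
  refine mem_halfspaceCoderivSet_of_tendsto ha (tendsto_adjoint_fderiv_apply hf hx huv) hyk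
    fun k => ?_
  obtain ⟨hxk, huk⟩ := hgraph k
  have hnormal' := hnormal k
  rw [show u k = f (x k) from huk] at hnormal'
  obtain ⟨t, ht, hz, hint⟩ := limNormalP_graph_halfspace hf ha hnormal'
  have hxv : xv k = (fderiv ℝ f (x k)†) (uv k) + t • a := by
    rw [← hz, map_neg]
    abel
  exact mem_halfspaceCoderivSet_of_mem_projSet_tangCone ha hxk ht hint (hxv ▸ hproj k)

lemma adjoint_mem_projCoderiv_halfspace {f : E → F} {a xb : E} {β : ℝ} (hf : ContDiff ℝ 1 f)
    (ha : a ≠ 0) (hxb : ⟪a, xb⟫ = β) (y : F) :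
    (fderiv ℝ f xb†) y ∈ projCoderiv (fun x => {f x}) {x | ⟪a, x⟫ ≤ β} xb (f xb) y := by
  set x : ℕ → E := fun k => xb - (1 / ((k : ℝ) + 1)) • a
  have hx : Tendsto x atTop (𝓝 xb) := by
    have := (tendsto_const_nhds (x := xb)).sub
      ((tendsto_one_div_add_atTop_nhds_zero_nat (𝕜 := ℝ)).smul_const a)
    rwa [zero_smul, sub_zero] at this
  have hint : ∀ k, ⟪a, x k⟫ < β := fun k => by
    have : 0 < 1 / ((k : ℝ) + 1) * ‖a‖ ^ 2 := by positivity
    rw [inner_sub_right, real_inner_smul_right, real_inner_self_eq_norm_sq, hxb]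
    linarith
  refine ⟨x, fun k => f (x k), fun k => (fderiv ℝ f (x k)†) y, fun _ => y,
    fun k => (fderiv ℝ f (x k)†) y, fun k => ⟨(hint k).le, rfl⟩, fun k => ?_, fun k => ?_, hx,
    (hf.continuous.tendsto xb).comp hx, tendsto_const_nhds,
    tendsto_adjoint_fderiv_apply hf hx tendsto_const_nhds⟩
  · simpa using adjoint_add_mem_limNormalP (v := 0) (hf.differentiable one_ne_zero _)
      (hint k).le (fun _ _ => by simp) y
  · rw [tangCone_eq_univ_of_mem_nhds (halfspace_mem_nhds (hint k)), projSet_univ]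
    rfl

lemma halfspaceCoderivSet_subset_projCoderiv {f : E → F} {a xb : E} {β : ℝ}
    (hf : ContDiff ℝ 1 f) (ha : a ≠ 0) (hxb : ⟪a, xb⟫ = β) (y : F) :
    halfspaceCoderivSet a ((fderiv ℝ f xb†) y) ⊆
      projCoderiv (fun x => {f x}) {x | ⟪a, x⟫ ≤ β} xb (f xb) y := by
  set d := (fderiv ℝ f xb†) y
  -- at `xb` itself, `d + t • a` is a limiting normal for every `t ≥ 0`
  have hboundary : ∀ t : ℝ, 0 ≤ t → (d + t • a) - (max ⟪d + t • a, a⟫ 0 / ‖a‖ ^ 2) • a ∈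
      projCoderiv (fun x => {f x}) {x | ⟪a, x⟫ ≤ β} xb (f xb) y := fun t ht => by
    refine mem_projCoderiv_of_mem_projSet ⟨hxb.le, rfl⟩
      (adjoint_add_mem_limNormalP (hf.differentiable one_ne_zero _) hxb.le (fun x' hx' => ?_) y)
      (by rw [tangCone_halfspace_of_eq hxb, projSet_halfspace]; rfl)
    rw [real_inner_smul_left, inner_sub_right, hxb]
    exact mul_nonpos_of_nonneg_of_nonpos ht (sub_nonpos.mpr hx')
  rintro _ ⟨r, ⟨hr, hpair⟩, rfl⟩
  rcases le_or_gt ⟪d, a⟫ 0 with hμ | hμ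
  · have hr' : 0 ≤ r ∧ r ≤ -(⟪d, a⟫ / ‖a‖ ^ 2) := by
      rwa [uIcc_of_le (neg_nonneg.mpr (div_nonpos_of_nonpos_of_nonneg hμ (by positivity)))] at hr
    have hneg : ⟪d + r • a, a⟫ ≤ 0 := by
      have h := le_neg.mp hr'.2
      rw [div_le_iff₀ (by positivity)] at h
      rw [inner_add_smul_self]
      linarith
    simpa [max_eq_right hneg] using hboundary r hr'.1
  · rcases hpair hμ with rfl | rfl
    · simpa using adjoint_mem_projCoderiv_halfspace hf ha hxb y
    · have := hboundary 0 le_rfl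
      rwa [zero_smul, add_zero, max_eq_left hμ.le, sub_eq_add_neg, ← neg_smul] at this

theorem projCoderiv_graph_halfspace {f : E → F} {a xb : E} {β : ℝ} (hf : ContDiff ℝ 1 f)
    (ha : a ≠ 0) (hxb : ⟪a, xb⟫ = β) (y : F) :
    projCoderiv (fun x => {f x}) {x | ⟪a, x⟫ ≤ β} xb (f xb) y =
      halfspaceCoderivSet a ((fderiv ℝ f xb†) y) :=
  (projCoderiv_graph_halfspace_subset hf ha y).antisymm
    (halfspaceCoderivSet_subset_projCoderiv hf ha hxb y)

end GraphHalfspace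

/-- Remark 2.2, half-space case: for a `C¹` mapping `F` and the half-space
`X = {x | ⟨a, x⟩ ≤ β}`, at a boundary point `x̄` the projectional coderivative is the
segment `[∇F(x̄)*y, proj_{[a]^⊥}(∇F(x̄)*y)]` if `⟨∇F(x̄)*y, a⟩ ≤ 0`, and the two-point set
`{∇F(x̄)*y, proj_{[a]^⊥}(∇F(x̄)*y)}` otherwise. -/
theorem projCoderiv_smooth_halfspace {n m : ℕ} (F : Eu n → Eu m) (hF : ContDiff ℝ 1 F)
    (a : Eu n) (ha : a ≠ 0) (β : ℝ) (xb : Eu n) (hxb : ⟪a, xb⟫ = β) :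
    ∀ y : Eu m,
      (⟪ContinuousLinearMap.adjoint (fderiv ℝ F xb) y, a⟫ ≤ 0 →
        projCoderiv (fun x => {F x}) {x : Eu n | ⟪a, x⟫ ≤ β} xb (F xb) y =
          segment ℝ (ContinuousLinearMap.adjoint (fderiv ℝ F xb) y)
            (ContinuousLinearMap.adjoint (fderiv ℝ F xb) y -
              (⟪ContinuousLinearMap.adjoint (fderiv ℝ F xb) y, a⟫ / ‖a‖ ^ 2) • a)) ∧
      (0 < ⟪ContinuousLinearMap.adjoint (fderiv ℝ F xb) y, a⟫ →
        projCoderiv (fun x => {F x}) {x : Eu n | ⟪a, x⟫ ≤ β} xb (F xb) y =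
          {ContinuousLinearMap.adjoint (fderiv ℝ F xb) y,
            ContinuousLinearMap.adjoint (fderiv ℝ F xb) y -
              (⟪ContinuousLinearMap.adjoint (fderiv ℝ F xb) y, a⟫ / ‖a‖ ^ 2) • a}) := by
  intro y
  rw [projCoderiv_graph_halfspace hF ha hxb y]
  exact ⟨halfspaceCoderivSet_of_inner_nonpos, halfspaceCoderivSet_of_inner_pos⟩
end
end

section
/- Let F : ℝⁿ → ℝᵐ be continuously differentiable and X = {x | Bx = b} a nonempty affine set (B an m×n matrix). For every x̄ ∈ X, the projectional coderivative of F with respect to X at x̄ satisfies D*_X F(x̄)(y) = {proj_{ker B}(∇F(x̄)*y)}. -/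
open Filter Metric Set
open scoped Topology RealInnerProductSpace

noncomputable section

/-! On the affine set `X` every tangent cone is `ker B`, and for `w ∈ ker B` the vector
`(w, ∇F(x) w)` is tangent to the graph of `F|_X` at `(x, F x)`. Regular normals are polar to
tangent vectors and `ker B` is a subspace, so every regular normal `(x*, -y*)` to the graph
satisfies `x* - ∇F(x)* y* ⊥ ker B`; by continuity of `∇F` this passes to limiting normals. Hence
the projection of `x*` onto `T_X(x) = ker B` is `proj_{ker B}(∇F(x)* y*)`, which tends to
`proj_{ker B}(∇F(x̄)* y)`. Conversely, the first-order expansion of `F` makes `(∇F(x̄)* y, -y)` a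
regular normal at `(x̄, F x̄)`, so constant sequences attain this value. -/

section NormedSpaces

variable {E F : Type*} [NormedAddCommGroup E] [NormedSpace ℝ E]
  [NormedAddCommGroup F] [NormedSpace ℝ F]

theorem tangCone_setOf_map_eq {B : E →L[ℝ] F} {b : F} {z : E} (hz : B z = b) :
    tangCone {x | B x = b} z = {w | B w = 0} := by
  ext w
  constructor
  · rintro ⟨t, v, ht, -, hv, hmem⟩
    have hBv : ∀ k, B (v k) = 0 := fun k => by
      have h : t k • B (v k) = 0 := by simpa [hz] using hmem k
      exact (smul_eq_zero.mp h).resolve_left (ht k).ne'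
    exact tendsto_nhds_unique ((B.continuous.tendsto w).comp hv) (by simp [Function.comp_def, hBv])
  · intro hw
    refine ⟨fun k => 1 / ((k : ℝ) + 1), fun _ => w, fun k => by positivity,
      tendsto_one_div_add_atTop_nhds_zero_nat, tendsto_const_nhds, fun k => ?_⟩
    simp [hz, show B w = 0 from hw]

theorem mem_tangCone_svGraph {f : E → F} {f' : E →L[ℝ] F} {X : Set E} {z w : E}
    (hf : HasFDerivAt f f' z) (hw : w ∈ tangCone X z) :
    (w, f' w) ∈ tangCone (svGraph (fun x => {f x}) X) (z, f z) := by
  obtain ⟨t, v, ht, ht0, hv, hmem⟩ := hw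
  have hdiff : Tendsto (fun k => (t k)⁻¹ • (f (z + t k • v k) - f z)) atTop (𝓝 (f' w)) := by
    refine hf.hasFDerivWithinAt.lim (s := univ) ?_ (by simp) ?_
    · simpa using ht0.smul hv
    · simpa [smul_smul, inv_mul_cancel₀ (ht _).ne'] using hv
  refine ⟨t, fun k => (v k, (t k)⁻¹ • (f (z + t k • v k) - f z)), ht, ht0, hv.prodMk_nhds hdiff,
    fun k => ⟨hmem k, ?_⟩⟩
  simp [smul_smul, mul_inv_cancel₀ (ht k).ne']

end NormedSpaces

section InnerProductSpaces

variable {E F : Type*} [NormedAddCommGroup E] [InnerProductSpace ℝ E]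
  [NormedAddCommGroup F] [InnerProductSpace ℝ F]

theorem projSet_submodule_eq_singleton (K : Submodule ℝ E) [K.HasOrthogonalProjection] (v : E) :
    projSet (K : Set E) v = {K.starProjection v} := by
  set P := K.starProjection v
  have pythagoras : ∀ z ∈ K, ‖v - z‖ ^ 2 = ‖v - P‖ ^ 2 + ‖P - z‖ ^ 2 := fun z hz => by
    simp only [sq]
    rw [← norm_add_sq_eq_norm_sq_add_norm_sq_real
      (K.starProjection_inner_eq_zero v _ (K.sub_mem (K.starProjection_apply_mem v) hz)),
      sub_add_sub_cancel]
  ext w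
  constructor
  · rintro ⟨hwK, hmin⟩
    have h := hmin P (K.starProjection_apply_mem v)
    have : ‖P - w‖ ^ 2 ≤ 0 := by nlinarith [pythagoras w hwK, norm_nonneg (v - w)]
    exact (sub_eq_zero.mp (norm_eq_zero.mp (by nlinarith [norm_nonneg (P - w)]))).symm
  · rintro rfl
    refine ⟨K.starProjection_apply_mem v, fun z hz => ?_⟩
    nlinarith [pythagoras z hz, norm_nonneg (v - z), norm_nonneg (v - P), norm_nonneg (P - z)]

theorem inner_nonpos_of_mem_regNormalP_of_mem_tangCone {A : Set (E × F)} {a q w : E × F}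
    (hq : q ∈ regNormalP A a) (hw : w ∈ tangCone A a) :
    ⟪q.1, w.1⟫ + ⟪q.2, w.2⟫ ≤ 0 := by
  obtain ⟨t, v, ht, ht0, hv, hmem⟩ := hw
  have hφ : Continuous fun u : E × F => ⟪q.1, u.1⟫ + ⟪q.2, u.2⟫ := by fun_prop
  have bound : ∀ ε > 0, ⟪q.1, w.1⟫ + ⟪q.2, w.2⟫ ≤ ε * ‖w‖ := fun ε hε => by
    obtain ⟨δ, hδ, hreg⟩ := hq ε hε
    have hsmall : ∀ᶠ k in atTop, ‖t k • v k‖ ≤ δ := by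
      have : Tendsto (fun k => ‖t k • v k‖) atTop (𝓝 0) := by simpa using (ht0.smul hv).norm
      exact this.eventually (ge_mem_nhds hδ)
    refine le_of_tendsto_of_tendsto (hφ.tendsto w |>.comp hv) (hv.norm.const_mul ε)
      (hsmall.mono fun k hk => ?_)
    have h := hreg _ (hmem k) (by simpa using hk)
    simp only [Prod.fst_add, Prod.snd_add, add_sub_cancel_left, Prod.smul_fst, Prod.smul_snd,
      real_inner_smul_right, norm_smul, Real.norm_of_nonneg (ht k).le] at h
    show ⟪q.1, (v k).1⟫ + ⟪q.2, (v k).2⟫ ≤ ε * ‖v k‖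
    exact le_of_mul_le_mul_left (by linarith) (ht k)
  have hlim : Tendsto (fun ε => ε * ‖w‖) (𝓝[>] 0) (𝓝 0) :=
    ((continuous_mul_const ‖w‖).tendsto' 0 0 (zero_mul _)).mono_left nhdsWithin_le_nhds
  exact ge_of_tendsto hlim (eventually_nhdsWithin_of_forall bound)

theorem mem_limNormalP_of_mem_regNormalP_s9 {A : Set (E × F)} {a q : E × F} (ha : a ∈ A)
    (hq : q ∈ regNormalP A a) : q ∈ limNormalP A a :=
  ⟨fun _ => a, fun _ => q, fun _ => ha, fun _ => hq, tendsto_const_nhds, tendsto_const_nhds⟩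

variable [CompleteSpace E] [CompleteSpace F]

theorem adjoint_mem_regNormalP_svGraph {f : E → F} {f' : E →L[ℝ] F} {z : E} (X : Set E)
    (hf : HasFDerivAt f f' z) (y : F) :
    (ContinuousLinearMap.adjoint f' y, -y) ∈ regNormalP (svGraph (fun x => {f x}) X) (z, f z) := by
  intro ε hε
  obtain ⟨δ, hδ, hball⟩ := Metric.nhds_basis_closedBall.eventually_iff.mp
    (hf.isLittleO.def (show 0 < ε / (‖y‖ + 1) by positivity))
  refine ⟨δ, hδ, ?_⟩
  rintro ⟨x, u⟩ ⟨-, hu : u = f x⟩ hdist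
  subst hu
  have hx : ‖x - z‖ ≤ ‖(x, f x) - (z, f z)‖ := (norm_fst_le ((x, f x) - (z, f z)) :)
  have hrem := hball (mem_closedBall_iff_norm.mpr (hx.trans hdist))
  calc ⟪ContinuousLinearMap.adjoint f' y, x - z⟫ + ⟪-y, f x - f z⟫
      = -⟪y, f x - f z - f' (x - z)⟫ := by
        rw [ContinuousLinearMap.adjoint_inner_left, inner_neg_left]
        simp only [inner_sub_right]
        ring
    _ ≤ ‖y‖ * (ε / (‖y‖ + 1) * ‖x - z‖) :=
        (neg_le_abs _).trans ((abs_real_inner_le_norm _ _).trans (by gcongr))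
    _ ≤ ε * ‖x - z‖ := by
        rw [← mul_assoc, mul_div_assoc']
        gcongr
        rw [div_le_iff₀ (by positivity)]
        nlinarith [norm_nonneg y]
    _ ≤ ε * ‖(x, f x) - (z, f z)‖ := by gcongr

theorem add_adjoint_mem_orthogonal_of_mem_regNormalP {f : E → F} {f' : E →L[ℝ] F} {X : Set E}
    {z : E} {K : Submodule ℝ E} {q : E × F} (hf : HasFDerivAt f f' z)
    (hK : (K : Set E) ⊆ tangCone X z) (hq : q ∈ regNormalP (svGraph (fun x => {f x}) X) (z, f z)) :
    q.1 + ContinuousLinearMap.adjoint f' q.2 ∈ Kᗮ := by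
  have hle : ∀ w ∈ K, ⟪q.1 + ContinuousLinearMap.adjoint f' q.2, w⟫ ≤ 0 := fun w hw => by
    rw [inner_add_left, ContinuousLinearMap.adjoint_inner_left]
    exact inner_nonpos_of_mem_regNormalP_of_mem_tangCone hq (mem_tangCone_svGraph hf (hK hw))
  refine (Submodule.mem_orthogonal' _ _).mpr fun w hw => le_antisymm (hle w hw) ?_
  simpa using hle (-w) (K.neg_mem hw)

theorem add_adjoint_mem_orthogonal_of_mem_limNormalP {f : E → F} (hf : ContDiff ℝ 1 f)
    {X : Set E} {z : E} {K : Submodule ℝ E} {q : E × F} (hK : ∀ x ∈ X, (K : Set E) ⊆ tangCone X x)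
    (hq : q ∈ limNormalP (svGraph (fun x => {f x}) X) (z, f z)) :
    q.1 + ContinuousLinearMap.adjoint (fderiv ℝ f z) q.2 ∈ Kᗮ := by
  obtain ⟨c, r, hc, hr, hcz, hrq⟩ := hq
  have hclosed : IsClosed {p : E × E × F |
      p.2.1 + ContinuousLinearMap.adjoint (fderiv ℝ f p.1) p.2.2 ∈ Kᗮ} :=
    K.isClosed_orthogonal.preimage (by have := hf.continuous_fderiv one_ne_zero; fun_prop)
  refine hclosed.mem_of_tendsto ((continuous_fst.tendsto _ |>.comp hcz).prodMk_nhds hrq)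
    (Eventually.of_forall fun k => ?_)
  have hck : c k = ((c k).1, f (c k).1) := Prod.ext rfl (hc k).2
  exact add_adjoint_mem_orthogonal_of_mem_regNormalP
    ((hf.differentiable one_ne_zero _).hasFDerivAt) (hK _ (hc k).1) (hck ▸ hr k)

end InnerProductSpaces

theorem projCoderiv_smooth_affine_general {n m p : ℕ} (F : Eu n → Eu m) (hF : ContDiff ℝ 1 F)
    (B : Eu n →L[ℝ] Eu p) (b : Eu p)
    (xb : Eu n) (hxb : B xb = b) :
    ∀ y : Eu m, projCoderiv (fun x => {F x}) {x : Eu n | B x = b} xb (F xb) y =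
      projSet {x : Eu n | B x = 0} (ContinuousLinearMap.adjoint (fderiv ℝ F xb) y) := by
  intro y
  set K := LinearMap.ker (B : Eu n →ₗ[ℝ] Eu p)
  have hT : ∀ x, B x = b → tangCone {x | B x = b} x = K := fun x hx => tangCone_setOf_map_eq hx
  set P := fun (x : Eu n) (u : Eu m) =>
    K.starProjection (ContinuousLinearMap.adjoint (fderiv ℝ F x) u)
  change _ = projSet (K : Set (Eu n)) _
  rw [projSet_submodule_eq_singleton]
  ext xs
  constructor
  · rintro ⟨x, u, xv, uv, yk, hgr, hnorm, hproj, hx, -, huv, hy⟩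
    have hyk : ∀ k, yk k = P (x k) (uv k) := fun k => by
      have hperp := add_adjoint_mem_orthogonal_of_mem_limNormalP hF (fun x hx => (hT x hx).ge)
        ((show u k = F (x k) from (hgr k).2) ▸ hnorm k)
      have h := hproj k
      rw [hT _ (hgr k).1, projSet_submodule_eq_singleton] at h
      rw [h, ← sub_eq_zero, ← map_sub, K.starProjection_apply_eq_zero_iff]
      simpa [sub_eq_add_neg] using hperp
    have hPc : Continuous fun z : Eu n × Eu m => P z.1 z.2 := by
      have := hF.continuous_fderiv one_ne_zero; fun_prop
    exact tendsto_nhds_unique hy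
      (((hPc.tendsto _).comp (hx.prodMk_nhds huv)).congr fun k => (hyk k).symm)
  · rintro rfl
    refine ⟨fun _ => xb, fun _ => F xb, fun _ => ContinuousLinearMap.adjoint (fderiv ℝ F xb) y,
      fun _ => y, fun _ => P xb y, fun _ => ⟨hxb, rfl⟩, fun _ => ?_, fun _ => ?_,
      tendsto_const_nhds, tendsto_const_nhds, tendsto_const_nhds, tendsto_const_nhds⟩
    · exact mem_limNormalP_of_mem_regNormalP_s9 ⟨hxb, rfl⟩ (adjoint_mem_regNormalP_svGraph _
        ((hF.differentiable one_ne_zero xb).hasFDerivAt) y)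
    · rw [hT xb hxb, projSet_submodule_eq_singleton]
      rfl

/-- Remark 2.2, affine case: for a `C¹` mapping `F` and a nonempty affine
set `X = {x | Bx = b}`, the projectional coderivative is the singleton
`{proj_{ker B}(∇F(x̄)*y)}`. -/
theorem projCoderiv_smooth_affine {n m p : ℕ} (F : Eu n → Eu m) (hF : ContDiff ℝ 1 F)
    (B : Eu n →L[ℝ] Eu p) (b : Eu p) (hne : {x : Eu n | B x = b}.Nonempty)
    (xb : Eu n) (hxb : B xb = b) :
    ∀ y : Eu m, projCoderiv (fun x => {F x}) {x : Eu n | B x = b} xb (F xb) y =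
      projSet {x : Eu n | B x = 0} (ContinuousLinearMap.adjoint (fderiv ℝ F xb) y) :=
  projCoderiv_smooth_affine_general F hF B b xb hxb
end
end

section
/- Let f : ℝⁿ → ℝ ∪ {+∞}, x̄ a point where f is finite and locally lower semicontinuous, and X ⊆ dom f with x̄ ∈ X. Then f is locally Lipschitz continuous at x̄ relative to X if and only if the profile mapping E_f : x ↦ {α ∈ ℝ | α ≥ f(x)} has the Lipschitz-like property relative to X at x̄ for f(x̄); moreover, the relative Lipschitz modulus lip_X f(x̄) equals the relative graphical modulus lip_X E_f(x̄ | f(x̄)). -/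
open Filter Metric Set
open scoped Topology RealInnerProductSpace

noncomputable section

private lemma ereal_le_add_of_sub_le' {a : EReal} {b c : ℝ}
    (h : a - (b : EReal) ≤ (c : EReal)) : a ≤ ((b + c : ℝ) : EReal) := by
  induction a using EReal.rec with
  | bot => exact bot_le
  | coe x =>
    rw [← EReal.coe_sub, EReal.coe_le_coe_iff] at h
    rw [EReal.coe_le_coe_iff]; linarith
  | top =>
    rw [EReal.top_sub_coe] at h
    exact absurd h (by simp)

private lemma lip_constants_iff' {n : ℕ} (f : Eu n → EReal) (X : Set (Eu n)) (xb : Eu n)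
    (r : ℝ) (hfin : f xb = (r : EReal)) (hxb : xb ∈ X) (κ : ℝ) (hκ : 0 ≤ κ) :
    (∃ V ∈ 𝓝 xb, ∀ x ∈ X ∩ V, ∀ y ∈ X ∩ V,
        eabsdiff (f x) (f y) ≤ ((κ * ‖x - y‖ : ℝ) : EReal)) ↔
    (∃ V ∈ 𝓝 xb, ∃ W ∈ 𝓝 r, ∀ x ∈ X ∩ V, ∀ x' ∈ X ∩ V,
        ∀ u ∈ {α : ℝ | f x' ≤ (α : EReal)} ∩ W,
        ∃ u'' ∈ {α : ℝ | f x ≤ (α : EReal)}, ‖u - u''‖ ≤ κ * ‖x' - x‖) := by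
  constructor
  · rintro ⟨V, hV, h⟩
    refine ⟨V, hV, univ, univ_mem, ?_⟩
    rintro x hx x' hx' u ⟨hu1, -⟩
    refine ⟨u + κ * ‖x' - x‖, ?_, ?_⟩
    · show f x ≤ ((u + κ * ‖x' - x‖ : ℝ) : EReal)
      have h1 : f x - f x' ≤ ((κ * ‖x - x'‖ : ℝ) : EReal) :=
        le_trans (le_max_left _ _) (h x hx x' hx')
      rcases eq_or_ne (f x) ⊥ with h2 | h2
      · rw [h2]; exact bot_le
      have hb : f x' ≠ ⊥ := by
        intro hb; rw [hb, EReal.sub_bot h2] at h1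
        exact (EReal.coe_lt_top _).not_ge h1
      have ht : f x' ≠ ⊤ := by
        intro ht; rw [ht] at hu1
        exact (EReal.coe_lt_top u).not_ge hu1
      have hcoe : (((f x').toReal : ℝ) : EReal) = f x' := EReal.coe_toReal ht hb
      rw [← hcoe] at h1 hu1
      have h3 := ereal_le_add_of_sub_le' h1
      refine le_trans h3 ?_
      rw [EReal.coe_le_coe_iff]
      have hbu : (f x').toReal ≤ u := by exact_mod_cast hu1
      rw [norm_sub_rev]
      linarith
    · rw [Real.norm_eq_abs]
      have he : u - (u + κ * ‖x' - x‖) = -(κ * ‖x' - x‖) := by ring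
      rw [he, abs_neg, abs_of_nonneg (mul_nonneg hκ (norm_nonneg _))]
  · rintro ⟨V, hV, W, hW, H⟩
    obtain ⟨ε, hε, hball⟩ := Metric.mem_nhds_iff.mp hW
    set δ := ε / (2 * (κ + 1)) with hδdef
    have hδ : 0 < δ := by positivity
    have hxbV : xb ∈ X ∩ (V ∩ ball xb δ) :=
      ⟨hxb, mem_of_mem_nhds hV, mem_ball_self hδ⟩
    have hsmall : ∀ z : Eu n, z ∈ ball xb δ → κ * ‖z - xb‖ < ε / 2 := by
      intro z hz
      rw [mem_ball, dist_eq_norm] at hz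
      have h1 : (0 : ℝ) < κ + 1 := by linarith
      have h2 : δ * (2 * (κ + 1)) = ε := by
        rw [hδdef]; exact div_mul_cancel₀ _ (by positivity)
      nlinarith [norm_nonneg (z - xb)]
    have hub : ∀ x ∈ X ∩ (V ∩ ball xb δ), f x ≤ ((r + κ * ‖x - xb‖ : ℝ) : EReal) := by
      intro x hx
      have hrW : r ∈ W := hball (mem_ball_self hε)
      obtain ⟨u'', hu''1, hu''2⟩ := H x ⟨hx.1, hx.2.1⟩ xb ⟨hxb, mem_of_mem_nhds hV⟩ r
        ⟨by simp [hfin], hrW⟩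
      refine le_trans hu''1 ?_
      rw [EReal.coe_le_coe_iff]
      rw [Real.norm_eq_abs, norm_sub_rev xb x] at hu''2
      have := abs_le.mp hu''2
      linarith [this.1]
    have hlb : ∀ y ∈ X ∩ (V ∩ ball xb δ), ((r - κ * ‖y - xb‖ : ℝ) : EReal) ≤ f y := by
      intro y hy
      by_contra hcon
      push_neg at hcon
      have hcgt : r - ε / 2 < r - κ * ‖y - xb‖ := by
        have := hsmall y hy.2.2; linarith
      have hcler : r - κ * ‖y - xb‖ ≤ r := by
        nlinarith [norm_nonneg (y - xb)]
      obtain ⟨u, hu1, hu2, hu3⟩ : ∃ u : ℝ, f y ≤ (u : EReal) ∧ u < r - κ * ‖y - xb‖ ∧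
          r - ε / 2 ≤ u := by
        by_cases hcase : f y ≤ ((r - ε / 2 : ℝ) : EReal)
        · exact ⟨r - ε / 2, hcase, hcgt, le_refl _⟩
        · push_neg at hcase
          have hnt : f y ≠ ⊤ := by
            intro ht; rw [ht] at hcon; exact absurd hcon (by simp)
          have hnb : f y ≠ ⊥ := by
            intro hb; rw [hb] at hcase; exact absurd hcase (by simp)
          refine ⟨(f y).toReal, le_of_eq (EReal.coe_toReal hnt hnb).symm, ?_, ?_⟩
          · rw [← EReal.coe_lt_coe_iff (x := (f y).toReal), EReal.coe_toReal hnt hnb]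
            exact hcon
          · rw [← EReal.coe_le_coe_iff, EReal.coe_toReal hnt hnb]
            exact le_of_lt hcase
      have huW : u ∈ W := by
        apply hball
        rw [mem_ball, Real.dist_eq, abs_lt]
        constructor <;> linarith
      obtain ⟨u'', hu''1, hu''2⟩ := H xb ⟨hxb, mem_of_mem_nhds hV⟩ y ⟨hy.1, hy.2.1⟩ u
        ⟨hu1, huW⟩
      have hr : r ≤ u'' := by
        rw [hfin] at hu''1; exact_mod_cast hu''1
      rw [Real.norm_eq_abs] at hu''2
      have := abs_le.mp hu''2
      linarith [this.1]
    refine ⟨V ∩ ball xb δ, inter_mem hV (ball_mem_nhds _ hδ), ?_⟩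
    intro x hx y hy
    have hux := hub x hx
    have huy := hub y hy
    have hlx := hlb x hx
    have hly := hlb y hy
    have hxt : f x ≠ ⊤ := by
      intro h; rw [h] at hux; exact (EReal.coe_lt_top _).not_ge hux
    have hxB : f x ≠ ⊥ := by
      intro h; rw [h] at hlx; exact (EReal.bot_lt_coe _).not_ge hlx
    have hyt : f y ≠ ⊤ := by
      intro h; rw [h] at huy; exact (EReal.coe_lt_top _).not_ge huy
    have hyB : f y ≠ ⊥ := by
      intro h; rw [h] at hly; exact (EReal.bot_lt_coe _).not_ge hly
    have hca : (((f x).toReal : ℝ) : EReal) = f x := EReal.coe_toReal hxt hxB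
    have hcb : (((f y).toReal : ℝ) : EReal) = f y := EReal.coe_toReal hyt hyB
    set a := (f x).toReal
    set b := (f y).toReal
    have hax : a ≤ r + κ * ‖x - xb‖ := by
      rw [← hca, EReal.coe_le_coe_iff] at hux; exact hux
    have hax' : r - κ * ‖x - xb‖ ≤ a := by
      rw [← hca, EReal.coe_le_coe_iff] at hlx; exact hlx
    have hby : b ≤ r + κ * ‖y - xb‖ := by
      rw [← hcb, EReal.coe_le_coe_iff] at huy; exact huy
    have hby' : r - κ * ‖y - xb‖ ≤ b := by
      rw [← hcb, EReal.coe_le_coe_iff] at hly; exact hly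
    have hsx := hsmall x hx.2.2
    have hsy := hsmall y hy.2.2
    have haW : a ∈ W := by
      apply hball; rw [mem_ball, Real.dist_eq, abs_lt]; constructor <;> linarith
    have hbW : b ∈ W := by
      apply hball; rw [mem_ball, Real.dist_eq, abs_lt]; constructor <;> linarith
    obtain ⟨u1, hu11, hu12⟩ := H x ⟨hx.1, hx.2.1⟩ y ⟨hy.1, hy.2.1⟩ b
      ⟨le_of_eq hcb.symm, hbW⟩
    obtain ⟨u2, hu21, hu22⟩ := H y ⟨hy.1, hy.2.1⟩ x ⟨hx.1, hx.2.1⟩ a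
      ⟨le_of_eq hca.symm, haW⟩
    have ha1 : a ≤ u1 := by rw [← hca] at hu11; exact_mod_cast hu11
    have hb2 : b ≤ u2 := by rw [← hcb] at hu21; exact_mod_cast hu21
    rw [Real.norm_eq_abs] at hu12 hu22
    have h12 := abs_le.mp hu12
    have h22 := abs_le.mp hu22
    have key1 : a - b ≤ κ * ‖x - y‖ := by
      rw [norm_sub_rev]; linarith [h12.1]
    have key2 : b - a ≤ κ * ‖x - y‖ := by
      linarith [h22.1]
    show max (f x - f y) (f y - f x) ≤ ((κ * ‖x - y‖ : ℝ) : EReal)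
    rw [← hca, ← hcb, ← EReal.coe_sub, ← EReal.coe_sub]
    exact max_le (EReal.coe_le_coe_iff.mpr key1) (EReal.coe_le_coe_iff.mpr key2)

/-- `f` is locally Lipschitz continuous at `x̄` relative to `X` iff the
profile mapping `E_f : x ↦ {α | α ≥ f(x)}` has the Lipschitz-like property relative to
`X` at `x̄` for `f(x̄)`; moreover the two moduli coincide. -/
theorem relLipschitz_iff_profile_lipschitzLike {n : ℕ} (f : Eu n → EReal)
    (X : Set (Eu n)) (xb : Eu n) (r : ℝ) (hfin : f xb = (r : EReal))
    (hlsc : LocallyClosedAt {p : Eu n × ℝ | f p.1 ≤ (p.2 : EReal)} (xb, r))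
    (hX : X ⊆ {x | f x < ⊤}) (hxb : xb ∈ X) :
    (RelLipschitzAt f X xb ↔
      ∃ κ : ℝ, 0 ≤ κ ∧
        LipschitzLikeRel (fun x => {α : ℝ | f x ≤ (α : EReal)}) X xb r κ) ∧
    relLipMod f X xb = gmod (fun x => {α : ℝ | f x ≤ (α : EReal)}) X xb r := by
  
  have hgraph : svGraph (fun x => {α : ℝ | f x ≤ (α : EReal)}) univ =
      {p : Eu n × ℝ | f p.1 ≤ (p.2 : EReal)} := by
    ext p; simp [svGraph]
  have hclosed : LocallyClosedAt
      (svGraph (fun x => {α : ℝ | f x ≤ (α : EReal)}) univ) (xb, r) := by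
    rw [hgraph]; exact hlsc
  have key := fun (κ : ℝ) (hκ : 0 ≤ κ) => lip_constants_iff' f X xb r hfin hxb κ hκ
  constructor
  · constructor
    · rintro ⟨κ, hκ, hP⟩
      obtain ⟨V, hV, W, hW, h⟩ := (key κ hκ).mp hP
      exact ⟨κ, hκ, hclosed, V, hV, W, hW, h⟩
    · rintro ⟨κ, hκ, -, V, hV, W, hW, h⟩
      exact ⟨κ, hκ, (key κ hκ).mpr ⟨V, hV, W, hW, h⟩⟩
  · unfold relLipMod gmod
    congr 1
    ext c
    constructor
    · rintro ⟨κ, hκ, rfl, hP⟩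
      exact ⟨κ, hκ, rfl, (key κ hκ).mp hP⟩
    · rintro ⟨κ, hκ, rfl, hQ⟩
      exact ⟨κ, hκ, rfl, (key κ hκ).mpr hQ⟩
end
end

section
/- Let D ⊆ ℝⁿ be a nonempty closed convex set and x ∈ (D^∞)* with F_{D,x} := argmax_{v ∈ D} ⟨v, x⟩ nonempty. Then the horizon cone of the exposed face F_{D,x} equals the face of the horizon cone exposed by x: (F_{D,x})^∞ = argmax_{v ∈ D^∞} ⟨v, x⟩. -/
open Filter Metric Set
open scoped Topology RealInnerProductSpace

noncomputable section

/-- Corollary 3.1, faces pairing: for a nonempty closed convex set `D` and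
`x ∈ (D^∞)*` with `F_{D,x} ≠ ∅`, the horizon cone of the exposed face `F_{D,x}` equals the
face of `D^∞` exposed by `x`. -/
theorem horizonCone_exposedFace {n : ℕ} (D : Set (Eu n)) (hne : D.Nonempty)
    (hcl : IsClosed D) (hconv : Convex ℝ D) (x : Eu n)
    (hx : ∀ w ∈ horizonCone D, ⟪w, x⟫ ≤ 0)
    (hface : {v | v ∈ D ∧ ∀ v' ∈ D, ⟪v', x⟫ ≤ ⟪v, x⟫}.Nonempty) :
    horizonCone {v | v ∈ D ∧ ∀ v' ∈ D, ⟪v', x⟫ ≤ ⟪v, x⟫} =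
      {w | w ∈ horizonCone D ∧ ∀ w' ∈ horizonCone D, ⟪w', x⟫ ≤ ⟪w, x⟫} := by

  obtain ⟨v0, hv0D, hv0max⟩ := hface
  -- tendsto of 1/(k+1)
  have hinv : Tendsto (fun k : ℕ => ((k : ℝ) + 1)⁻¹) atTop (𝓝 0) :=
    tendsto_one_div_add_atTop_nhds_zero_nat.congr (fun k => by rw [one_div])
  have h0mem : (0 : Eu n) ∈ horizonCone D := by
    refine ⟨fun _ => v0, fun k => ((k : ℝ) + 1)⁻¹, fun _ => hv0D,
      fun k => by positivity, hinv, ?_⟩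
    simpa using hinv.smul_const v0
  -- D + horizonCone D ⊆ D
  have key : ∀ w ∈ horizonCone D, ∀ v ∈ D, v + w ∈ D := by
    rintro w ⟨a, l, haD, hlpos, hl0, hla⟩ v hv
    have hten : Tendsto (fun k => (1 - l k) • v + l k • a k) atTop (𝓝 (v + w)) := by
      have h1 : Tendsto (fun k => (1 - l k) • v) atTop (𝓝 v) := by
        have := ((tendsto_const_nhds : Tendsto (fun _ : ℕ => (1:ℝ)) atTop (𝓝 1)).sub hl0).smul_const v
        simpa using this
      exact h1.add hla
    have hev : ∀ᶠ k in atTop, (1 - l k) • v + l k • a k ∈ D := by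
      filter_upwards [hl0.eventually (eventually_lt_nhds one_pos)] with k hk
      exact hconv hv (haD k) (by linarith) (le_of_lt (hlpos k)) (by ring)
    exact hcl.mem_of_tendsto hten hev
  ext w
  constructor
  · rintro ⟨a, l, haF, hlpos, hl0, hla⟩
    have hwD : w ∈ horizonCone D := ⟨a, l, fun k => (haF k).1, hlpos, hl0, hla⟩
    have hwx : ⟪w, x⟫ = 0 := by
      have hm : ∀ k, ⟪a k, x⟫ = ⟪v0, x⟫ := fun k =>
        le_antisymm (hv0max _ (haF k).1) ((haF k).2 _ hv0D)
      have h1 : Tendsto (fun k => ⟪l k • a k, x⟫) atTop (𝓝 ⟪w, x⟫) :=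
        hla.inner tendsto_const_nhds
      have h2 : Tendsto (fun k => ⟪l k • a k, x⟫) atTop (𝓝 0) := by
        have : (fun k => ⟪l k • a k, x⟫) = fun k => l k * ⟪v0, x⟫ := by
          funext k; rw [real_inner_smul_left, hm k]
        rw [this]
        simpa using hl0.mul_const (⟪v0, x⟫ : ℝ)
      exact tendsto_nhds_unique h1 h2
    exact ⟨hwD, fun w' hw' => by rw [hwx]; exact hx w' hw'⟩
  · rintro ⟨hwD, hwmax⟩
    have hwx : ⟪w, x⟫ = 0 := by
      have h1 := hx w hwD
      have h2 := hwmax 0 h0mem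
      simp only [inner_zero_left] at h2
      linarith
    have hmemD : ∀ m : ℕ, v0 + (m : ℝ) • w ∈ D := by
      intro m
      induction m with
      | zero => simpa using hv0D
      | succ m ih =>
        have := key w hwD _ ih
        convert this using 1
        push_cast
        rw [add_smul, one_smul]
        abel
    refine ⟨fun k => v0 + ((k : ℝ) + 1) • w, fun k => ((k : ℝ) + 1)⁻¹, ?_, 
      fun k => by positivity, hinv, ?_⟩
    · intro k
      have hD : v0 + ((k : ℝ) + 1) • w ∈ D := by
        have := hmemD (k + 1); push_cast at this; exact this
      refine ⟨hD, fun v' hv' => ?_⟩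
      have : ⟪v0 + ((k : ℝ) + 1) • w, x⟫ = ⟪v0, x⟫ := by
        rw [inner_add_left, real_inner_smul_left, hwx]; ring
      rw [this]
      exact hv0max v' hv'
    · have hcalc : (fun k : ℕ => (((k : ℝ) + 1)⁻¹) • (v0 + ((k : ℝ) + 1) • w)) =
          fun k : ℕ => (((k : ℝ) + 1)⁻¹) • v0 + w := by
        funext k
        rw [smul_add, smul_smul, inv_mul_cancel₀ (by positivity : ((k : ℝ) + 1) ≠ 0), one_smul]
      rw [hcalc]
      simpa using (hinv.smul_const v0).add (tendsto_const_nhds (x := w))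
end
end
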